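/- arXiv:2001.07754 — 8 statements merged into one kernel-verified Lean document; each statement's English description precedes it below -/
import Mathlib

section
/- Let O be the ELU ontology {A ⊑ B₁ ⊔ B₂, ∃r.B₁ ⊑ B₁, ∃r.B₂ ⊑ B₂, B₁ ⊓ A' ⊑ M, B₂ ⊓ A' ⊑ M}. Then for every n ≥ 0, every model of O satisfies the concept inclusion A' ⊓ ∃rⁿ.A ⊑ M (where ∃rⁿ.A denotes n-fold nesting of ∃r applied to A). -/
namespace DL

/- Basic description-logic framework: concepts, interpretations, ontologies. -/

inductive Concept (Cn R : Type) : Type where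
  | top  : Concept Cn R
  | bot  : Concept Cn R
  | name : Cn → Concept Cn R
  | neg  : Concept Cn R → Concept Cn R
  | conj : Concept Cn R → Concept Cn R → Concept Cn R
  | disj : Concept Cn R → Concept Cn R → Concept Cn R
  | ex   : R → Concept Cn R → Concept Cn R
  | all  : R → Concept Cn R → Concept Cn R
  deriving DecidableEq

namespace Concept
variable {Cn R : Type}

/-- `EL` concepts: only ⊤, concept names, ⊓ and ∃r.C. -/
def isEL : Concept Cn R → Prop
  | top => True
  | bot => False
  | name _ => True
  | neg _ => False
  | conj c d => c.isEL ∧ d.isEL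
  | disj _ _ => False
  | ex _ c => c.isEL
  | all _ _ => False

/-- `ELU` concepts: additionally allow ⊔. -/
def isELU : Concept Cn R → Prop
  | top => True
  | bot => False
  | name _ => True
  | neg _ => False
  | conj c d => c.isELU ∧ d.isELU
  | disj c d => c.isELU ∧ d.isELU
  | ex _ c => c.isELU
  | all _ _ => False

/-- `EL⊥` concepts. -/
def isELbot : Concept Cn R → Prop
  | top => True
  | bot => True
  | name _ => True
  | neg _ => False
  | conj c d => c.isELbot ∧ d.isELbot
  | disj _ _ => False
  | ex _ c => c.isELbot
  | all _ _ => False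

/-- `ELU⊥` concepts. -/
def isELUbot : Concept Cn R → Prop
  | top => True
  | bot => True
  | name _ => True
  | neg _ => False
  | conj c d => c.isELUbot ∧ d.isELUbot
  | disj c d => c.isELUbot ∧ d.isELUbot
  | ex _ c => c.isELUbot
  | all _ _ => False

/-- the nesting depth of ∃/∀ restrictions. -/
def depth : Concept Cn R → ℕ
  | top => 0
  | bot => 0
  | name _ => 0
  | neg c => c.depth
  | conj c d => max c.depth d.depth
  | disj c d => max c.depth d.depth
  | ex _ c => c.depth + 1
  | all _ c => c.depth + 1

/-- size of a concept (occurrences of symbols). -/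
def size : Concept Cn R → ℕ
  | top => 1
  | bot => 1
  | name _ => 1
  | neg c => c.size + 1
  | conj c d => c.size + d.size + 1
  | disj c d => c.size + d.size + 1
  | ex _ c => c.size + 2
  | all _ c => c.size + 2

/-- set of subconcepts. -/
def sub : Concept Cn R → Set (Concept Cn R)
  | top => {top}
  | bot => {bot}
  | name A => {name A}
  | neg c => insert (neg c) c.sub
  | conj c d => insert (conj c d) (c.sub ∪ d.sub)
  | disj c d => insert (disj c d) (c.sub ∪ d.sub)
  | ex r c => insert (ex r c) c.sub
  | all r c => insert (all r c) c.sub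

/-- concept names occurring in a concept. -/
def names : Concept Cn R → Set Cn
  | top => ∅
  | bot => ∅
  | name A => {A}
  | neg c => c.names
  | conj c d => c.names ∪ d.names
  | disj c d => c.names ∪ d.names
  | ex _ c => c.names
  | all _ c => c.names

/-- role names occurring in a concept. -/
def roles : Concept Cn R → Set R
  | top => ∅
  | bot => ∅
  | name _ => ∅
  | neg c => c.roles
  | conj c d => c.roles ∪ d.roles
  | disj c d => c.roles ∪ d.roles
  | ex r c => insert r c.roles
  | all r c => insert r c.roles

/-- top-level conjuncts of a concept. -/
def tlConj : Concept Cn R → Set (Concept Cn R)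
  | conj c d => c.tlConj ∪ d.tlConj
  | c => {c}

end Concept

/-- n-fold nesting of ∃r applied to a concept. -/
def exN {Cn R : Type} (r : R) : ℕ → Concept Cn R → Concept Cn R
  | 0, c => c
  | n + 1, c => Concept.ex r (exN r n c)

/-- An interpretation: a domain together with extensions of concept and role names. -/
structure Interp (Cn R : Type) : Type 1 where
  Dom : Type
  cI : Cn → Set Dom
  rI : R → Set (Dom × Dom)

/-- Semantics of concepts. -/
def Interp.interp {Cn R : Type} (I : Interp Cn R) : Concept Cn R → Set I.Dom
  | .top => Set.univ
  | .bot => ∅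
  | .name A => I.cI A
  | .neg c => (I.interp c)ᶜ
  | .conj c d => I.interp c ∩ I.interp d
  | .disj c d => I.interp c ∪ I.interp d
  | .ex r c => {x | ∃ y, (x, y) ∈ I.rI r ∧ y ∈ I.interp c}
  | .all r c => {x | ∀ y, (x, y) ∈ I.rI r → y ∈ I.interp c}

/-- An ontology: a set of concept inclusions `C ⊑ D`, coded as pairs `(C, D)`. -/
abbrev Ontology (Cn R : Type) := Set (Concept Cn R × Concept Cn R)

/-- `I` is a model of the ontology `O`. -/
def Interp.isModel {Cn R : Type} (I : Interp Cn R) (O : Ontology Cn R) : Prop :=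
  ∀ ci ∈ O, I.interp ci.1 ⊆ I.interp ci.2

/-- `O ⊨ c ⊑ d`. -/
def entails {Cn R : Type} (O : Ontology Cn R) (c d : Concept Cn R) : Prop :=
  ∀ I : Interp Cn R, I.isModel O → I.interp c ⊆ I.interp d

/-- logical equivalence (w.r.t. the empty ontology). -/
def lequiv {Cn R : Type} (c d : Concept Cn R) : Prop :=
  entails ∅ c d ∧ entails ∅ d c

/-- set of subconcepts of an ontology. -/
def subO {Cn R : Type} (O : Ontology Cn R) : Set (Concept Cn R) :=
  {F | ∃ ci ∈ O, F ∈ ci.1.sub ∪ ci.2.sub}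

/-- concept names of an ontology. -/
def sigC {Cn R : Type} (O : Ontology Cn R) : Set Cn :=
  {A | ∃ ci ∈ O, A ∈ ci.1.names ∪ ci.2.names}

/-- role names of an ontology. -/
def sigR {Cn R : Type} (O : Ontology Cn R) : Set R :=
  {r | ∃ ci ∈ O, r ∈ ci.1.roles ∪ ci.2.roles}


/- STATEMENT 0: the ontology O = {A ⊑ B₁ ⊔ B₂, ∃r.B₁ ⊑ B₁, ∃r.B₂ ⊑ B₂,
   B₁ ⊓ A' ⊑ M, B₂ ⊓ A' ⊑ M} entails A' ⊓ ∃rⁿ.A ⊑ M for all n. -/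

-- concept names: A = 0, A' = 1, B₁ = 2, B₂ = 3, M = 4; role name: r = 0
def cA : Concept ℕ ℕ := .name 0
def cA' : Concept ℕ ℕ := .name 1
def cB₁ : Concept ℕ ℕ := .name 2
def cB₂ : Concept ℕ ℕ := .name 3
def cM : Concept ℕ ℕ := .name 4
def rr : ℕ := 0

def O₀ : Ontology ℕ ℕ :=
  {(cA, .disj cB₁ cB₂),
   (.ex rr cB₁, cB₁),
   (.ex rr cB₂, cB₂),
   (.conj cB₁ cA', cM),
   (.conj cB₂ cA', cM)}

theorem stmt0 :
    ∀ n : ℕ, ∀ I : Interp ℕ ℕ, I.isModel O₀ →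
      I.interp (.conj cA' (exN rr n cA)) ⊆ I.interp cM := by
  have key : ∀ n : ℕ, ∀ I : Interp ℕ ℕ, I.isModel O₀ →
      I.interp (exN rr n cA) ⊆ I.interp cB₁ ∪ I.interp cB₂ := by
    intro n
    induction n with
    | zero =>
      intro I hI x hx
      have h1 := hI (cA, .disj cB₁ cB₂) (by simp [O₀])
      exact h1 hx
    | succ n ih =>
      intro I hI x hx
      obtain ⟨y, hxy, hy⟩ := hx
      rcases ih I hI hy with h | h
      · exact Or.inl (hI (.ex rr cB₁, cB₁) (by simp [O₀]) ⟨y, hxy, h⟩)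
      · exact Or.inr (hI (.ex rr cB₂, cB₂) (by simp [O₀]) ⟨y, hxy, h⟩)
  intro n I hI x hx
  obtain ⟨hx1, hx2⟩ := hx
  rcases key n I hI hx2 with h | h
  · exact hI (.conj cB₁ cA', cM) (by simp [O₀]) ⟨h, hx1⟩
  · exact hI (.conj cB₂ cA', cM) (by simp [O₀]) ⟨h, hx1⟩
end DL
end

section
/- Let O be the ELU ontology {A ⊑ B₁ ⊔ B₂, ∃r.B₁ ⊑ B₁, ∃r.B₂ ⊑ B₂, B₁ ⊓ A' ⊑ M, B₂ ⊓ A' ⊑ M}. Then there is no finite set O' of concept inclusions of the form A' ⊓ ∃rⁿ.A ⊑ M (n ≥ 0) such that every model of O' satisfies A' ⊓ ∃rᵐ.A ⊑ M for all m ≥ 0. -/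
namespace DL

/-- counterexample chain interpretation: A at m, A' at 0, M empty, r the successor chain. -/
@[reducible] def cex (m : ℕ) : Interp ℕ ℕ :=
  ⟨ℕ, fun c => if c = 0 then {m} else if c = 1 then {0} else ∅, fun _ => {p | p.2 = p.1 + 1}⟩

lemma cex_exN (m n x : ℕ) : x ∈ (cex m).interp (exN rr n cA) ↔ x + n = m := by
  induction n generalizing x with
  | zero => simp [exN, cA, Interp.interp, cex]
  | succ k ih =>
    simp only [exN, Interp.interp, Set.mem_setOf_eq]
    constructor
    · rintro ⟨y, hy, hy2⟩
      have h1 := (ih y).mp hy2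
      have hy' : y = x + 1 := hy
      omega
    · intro h
      exact ⟨x + 1, by simp [cex], (ih (x+1)).mpr (by omega)⟩

theorem stmt1 :
    ¬ ∃ S : Finset ℕ,
      ∀ I : Interp ℕ ℕ,
        I.isModel {ci | ∃ n ∈ S, ci = (Concept.conj cA' (exN rr n cA), cM)} →
        ∀ m : ℕ, I.interp (.conj cA' (exN rr m cA)) ⊆ I.interp cM := by
  rintro ⟨S, hS⟩
  have hmS : S.sup id + 1 ∉ S := by
    intro h
    have := Finset.le_sup (f := id) h
    simp only [id] at this
    omega
  have hmodel : (cex (S.sup id + 1)).isModel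
      {ci | ∃ n ∈ S, ci = (Concept.conj cA' (exN rr n cA), cM)} := by
    rintro ci ⟨n, hn, rfl⟩ x hx
    simp only [Interp.interp, Set.mem_inter_iff] at hx
    obtain ⟨h1, h2⟩ := hx
    have hx0 : x = 0 := by simpa [cA', Interp.interp, cex] using h1
    have h3 := (cex_exN _ n x).mp h2
    subst hx0
    simp only [Nat.zero_add] at h3
    exact absurd hn (h3 ▸ hmS)
  have h0 : (0 : ℕ) ∈ (cex (S.sup id + 1)).interp
      (Concept.conj cA' (exN rr (S.sup id + 1) cA)) := by
    exact Set.mem_inter (by simp [cA', Interp.interp, cex])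
      ((cex_exN (S.sup id + 1) (S.sup id + 1) 0).mpr (by omega))
  have := hS (cex (S.sup id + 1)) hmodel (S.sup id + 1) h0
  simp [cM, Interp.interp, cex] at this

end DL
end

section
/- Let O be an EL ontology and C, D be EL concepts with O ⊨ C ⊑ ∃r.D. Then either (1) C has a top-level conjunct ∃r.C' with O ⊨ C' ⊑ D, or (2) there exists a subconcept C' of O such that O ⊨ C ⊑ ∃r.C' and O ⊨ C' ⊑ D. -/
namespace DL

section Canon

variable {Cn R : Type}

theorem entails_refl (O : Ontology Cn R) (c : Concept Cn R) : entails O c c :=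
  fun _ _ => subset_rfl

theorem entails_trans {O : Ontology Cn R} {c d e : Concept Cn R}
    (h1 : entails O c d) (h2 : entails O d e) : entails O c e :=
  fun I hI => (h1 I hI).trans (h2 I hI)

theorem entails_ax {O : Ontology Cn R} {c d : Concept Cn R} (h : (c, d) ∈ O) :
    entails O c d := fun I hI => hI _ h

theorem entails_conj_left {O : Ontology Cn R} {c d e : Concept Cn R}
    (h : entails O c (.conj d e)) : entails O c d :=
  fun I hI x hx => (h I hI hx).1

theorem entails_conj_right {O : Ontology Cn R} {c d e : Concept Cn R}
    (h : entails O c (.conj d e)) : entails O c e :=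
  fun I hI x hx => (h I hI hx).2

theorem entails_tlConj {O : Ontology Cn R} {c g : Concept Cn R} (h : g ∈ c.tlConj) :
    entails O c g := by
  induction c with
  | conj c d ihc ihd =>
    simp only [Concept.tlConj, Set.mem_union] at h
    rcases h with h | h
    · exact fun I hI x hx => ihc h I hI hx.1
    · exact fun I hI x hx => ihd h I hI hx.2
  | top => simp only [Concept.tlConj, Set.mem_singleton_iff] at h; subst h; exact entails_refl O _
  | bot => simp only [Concept.tlConj, Set.mem_singleton_iff] at h; subst h; exact entails_refl O _
  | name A => simp only [Concept.tlConj, Set.mem_singleton_iff] at h; subst h; exact entails_refl O _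
  | neg c ih => simp only [Concept.tlConj, Set.mem_singleton_iff] at h; subst h; exact entails_refl O _
  | disj c d ihc ihd => simp only [Concept.tlConj, Set.mem_singleton_iff] at h; subst h; exact entails_refl O _
  | ex r c ih => simp only [Concept.tlConj, Set.mem_singleton_iff] at h; subst h; exact entails_refl O _
  | all r c ih => simp only [Concept.tlConj, Set.mem_singleton_iff] at h; subst h; exact entails_refl O _

theorem entails_ex_mono {O : Ontology Cn R} {c d : Concept Cn R} (r : R)
    (h : entails O c d) : entails O (.ex r c) (.ex r d) := by
  intro I hI x hx
  obtain ⟨y, hy1, hy2⟩ := hx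
  exact ⟨y, hy1, h I hI hy2⟩

theorem mem_sub_self (c : Concept Cn R) : c ∈ c.sub := by
  cases c <;> simp [Concept.sub]

theorem sub_trans {c d e : Concept Cn R} (h1 : d ∈ c.sub) (h2 : e ∈ d.sub) :
    e ∈ c.sub := by
  induction c with
  | top =>
    simp only [Concept.sub, Set.mem_singleton_iff] at h1 ⊢
    subst h1; simpa [Concept.sub] using h2
  | bot =>
    simp only [Concept.sub, Set.mem_singleton_iff] at h1 ⊢
    subst h1; simpa [Concept.sub] using h2
  | name A =>
    simp only [Concept.sub, Set.mem_singleton_iff] at h1 ⊢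
    subst h1; simpa [Concept.sub] using h2
  | neg c ih =>
    simp only [Concept.sub, Set.mem_insert_iff] at h1 ⊢
    rcases h1 with h1 | h1
    · subst h1; simpa [Concept.sub] using h2
    · exact Or.inr (ih h1)
  | conj c d ihc ihd =>
    simp only [Concept.sub, Set.mem_insert_iff, Set.mem_union] at h1 ⊢
    rcases h1 with h1 | h1 | h1
    · subst h1; simpa [Concept.sub] using h2
    · exact Or.inr (Or.inl (ihc h1))
    · exact Or.inr (Or.inr (ihd h1))
  | disj c d ihc ihd =>
    simp only [Concept.sub, Set.mem_insert_iff, Set.mem_union] at h1 ⊢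
    rcases h1 with h1 | h1 | h1
    · subst h1; simpa [Concept.sub] using h2
    · exact Or.inr (Or.inl (ihc h1))
    · exact Or.inr (Or.inr (ihd h1))
  | ex r c ih =>
    simp only [Concept.sub, Set.mem_insert_iff] at h1 ⊢
    rcases h1 with h1 | h1
    · subst h1; simpa [Concept.sub] using h2
    · exact Or.inr (ih h1)
  | all r c ih =>
    simp only [Concept.sub, Set.mem_insert_iff] at h1 ⊢
    rcases h1 with h1 | h1
    · subst h1; simpa [Concept.sub] using h2
    · exact Or.inr (ih h1)

theorem subO_closed {O : Ontology Cn R} {f g : Concept Cn R}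
    (hf : f ∈ subO O) (hg : g ∈ f.sub) : g ∈ subO O := by
  obtain ⟨ci, hci, hf⟩ := hf
  rcases hf with hf | hf
  · exact ⟨ci, hci, Or.inl (sub_trans hf hg)⟩
  · exact ⟨ci, hci, Or.inr (sub_trans hf hg)⟩

/-- The canonical interpretation for an ontology `O`: domain is the set of all
concepts, concept names are interpreted via entailment, and role edges come
either from top-level existential conjuncts or from entailed existentials whose
filler is a subconcept of `O`. -/
def canon (O : Ontology Cn R) : Interp Cn R where
  Dom := Concept Cn R
  cI A := {e | entails O e (.name A)}
  rI s := {p | Concept.ex s p.2 ∈ p.1.tlConj ∨ (p.2 ∈ subO O ∧ entails O p.1 (.ex s p.2))}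

theorem canon_sound (O : Ontology Cn R) :
    ∀ g : Concept Cn R, g.isEL → ∀ e : Concept Cn R,
      e ∈ (canon O).interp g → entails O e g := by
  intro g
  induction g with
  | top => exact fun _ e _ I hI x _ => Set.mem_univ x
  | bot => exact fun h => h.elim
  | name A => exact fun _ e he => he
  | neg c ih => exact fun h => h.elim
  | disj c d ihc ihd => exact fun h => h.elim
  | all r c ih => exact fun h => h.elim
  | conj c d ihc ihd =>
    intro hEL e he I hI x hx
    exact ⟨ihc hEL.1 e he.1 I hI hx, ihd hEL.2 e he.2 I hI hx⟩
  | ex s f ihf =>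
    intro hEL e he
    obtain ⟨y, hy, hyf⟩ := he
    have h2 : entails O y f := ihf hEL y hyf
    rcases hy with hy | hy
    · exact entails_trans (entails_tlConj hy) (entails_ex_mono s h2)
    · exact entails_trans hy.2 (entails_ex_mono s h2)

theorem canon_refl' (O : Ontology Cn R) :
    ∀ g : Concept Cn R, g.isEL → ∀ e : Concept Cn R,
      g.tlConj ⊆ e.tlConj → e ∈ (canon O).interp g := by
  intro g
  induction g with
  | top => exact fun _ e _ => Set.mem_univ e
  | bot => exact fun h => h.elim
  | name A =>
    intro _ e hsub
    exact entails_tlConj (hsub (by simp [Concept.tlConj]))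
  | neg c ih => exact fun h => h.elim
  | disj c d ihc ihd => exact fun h => h.elim
  | all r c ih => exact fun h => h.elim
  | conj c d ihc ihd =>
    intro hEL e hsub
    refine ⟨ihc hEL.1 e ?_, ihd hEL.2 e ?_⟩
    · exact fun x hx => hsub (by simp only [Concept.tlConj, Set.mem_union]; exact Or.inl hx)
    · exact fun x hx => hsub (by simp only [Concept.tlConj, Set.mem_union]; exact Or.inr hx)
  | ex s f ihf =>
    intro hEL e hsub
    exact ⟨f, Or.inl (hsub (by simp [Concept.tlConj])), ihf hEL f subset_rfl⟩

theorem canon_refl (O : Ontology Cn R) {c : Concept Cn R} (hc : c.isEL) :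
    c ∈ (canon O).interp c := canon_refl' O c hc c subset_rfl

theorem canon_complete (O : Ontology Cn R) :
    ∀ h : Concept Cn R, h.isEL → h.sub ⊆ subO O → ∀ e : Concept Cn R,
      entails O e h → e ∈ (canon O).interp h := by
  intro h
  induction h with
  | top => exact fun _ _ e _ => Set.mem_univ e
  | bot => exact fun h => h.elim
  | name A => exact fun _ _ e he => he
  | neg c ih => exact fun h => h.elim
  | disj c d ihc ihd => exact fun h => h.elim
  | all r c ih => exact fun h => h.elim
  | conj c d ihc ihd =>
    intro hEL hsub e he
    refine ⟨ihc hEL.1 ?_ e (entails_conj_left he), ihd hEL.2 ?_ e (entails_conj_right he)⟩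
    · intro x hx
      exact hsub (by simp only [Concept.sub, Set.mem_insert_iff, Set.mem_union]; tauto)
    · intro x hx
      exact hsub (by simp only [Concept.sub, Set.mem_insert_iff, Set.mem_union]; tauto)
  | ex s f ihf =>
    intro hEL hsub e he
    have hf : f ∈ subO O := hsub (by
      simp only [Concept.sub, Set.mem_insert_iff]
      exact Or.inr (mem_sub_self f))
    exact ⟨f, Or.inr ⟨hf, he⟩, canon_refl O hEL⟩

theorem canon_model (O : Ontology Cn R) (hO : ∀ ci ∈ O, ci.1.isEL ∧ ci.2.isEL) :
    (canon O).isModel O := by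
  intro ci hci e he
  have h1 : entails O e ci.1 := canon_sound O ci.1 (hO ci hci).1 e he
  have h2 : entails O e ci.2 := entails_trans h1 (entails_ax hci)
  exact canon_complete O ci.2 (hO ci hci).2 (fun x hx => ⟨ci, hci, Or.inr hx⟩) e h2

end Canon

/- STATEMENT 4: EL decomposition lemma for entailed existential restrictions. -/

theorem stmt4 {Cn R : Type} (O : Ontology Cn R)
    (hO : ∀ ci ∈ O, ci.1.isEL ∧ ci.2.isEL)
    (C D : Concept Cn R) (r : R) (hC : C.isEL) (hD : D.isEL)
    (h : entails O C (.ex r D)) :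
    (∃ C', Concept.ex r C' ∈ C.tlConj ∧ entails O C' D) ∨
    (∃ C' ∈ subO O, entails O C (.ex r C') ∧ entails O C' D) := by
  have hm := canon_model O hO
  have hc : C ∈ (canon O).interp C := canon_refl O hC
  obtain ⟨y, hy, hyD⟩ := h (canon O) hm hc
  have hyd : entails O y D := canon_sound O D hD y hyD
  rcases hy with h1 | h2
  · exact Or.inl ⟨y, h1, hyd⟩
  · exact Or.inr ⟨y, h2.1, h2.2, hyd⟩
end DL
end

section
/- An ELU ontology O has infinitely many pairwise non-logically-equivalent O-generatable EL concepts if and only if for every n ≥ 0 there exists a concept ∃r.D in sub(O) occurring on the right-hand side of some inclusion in O and a sequence r₁,…,rₙ of role names from O such that O ⊨ D ⊑ ∃r₁.⋯.∃rₙ.⊤. -/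
namespace DL

/- STATEMENT 5: characterization of ontologies with infinitely many pairwise
   non-equivalent O-generatable EL concepts. -/

/-- `∃r₁.⋯.∃rₙ.⊤` for a list of role names. -/
def exChain {Cn R : Type} : List R → Concept Cn R
  | [] => .top
  | r :: l => .ex r (exChain l)

/-- `C` is O-generatable: some `∃r.D ∈ sub(O)` occurring on the right-hand side of an
    inclusion of `O` satisfies `O ⊨ D ⊑ C`. -/
def generatable {Cn R : Type} (O : Ontology Cn R) (C : Concept Cn R) : Prop :=
  ∃ (r : R) (D : Concept Cn R),
    (∃ ci ∈ O, Concept.ex r D ∈ ci.2.sub) ∧ entails O D C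


/-!
Proof idea. The one-point interpretation in which exactly the symbols of `O` hold is a model
of `O` (every `ELU` concept over the signature of `O` is true at its point), and an `EL`
concept is true there only if it uses no other symbols; hence every `O`-generatable `EL`
concept lives in the finite signature of `O`. The semantics of an `EL` concept of depth
`≤ n + 1` is the infimum of a subset of the finitely many atoms `A` and `∃r.D` with `D` of
depth `≤ n`, so by induction there are only finitely many such concepts up to equivalence.
Infinitely many pairwise inequivalent generatable concepts therefore have unbounded depth, and
a concept of depth `≥ n` entails a chain `∃r₁.⋯.∃rₙ.⊤`. Conversely, the chains themselves are
generatable `EL` concepts, pairwise inequivalent because the interpretation on `ℕ` in which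
every role is the predecessor relation satisfies `∃r₁.⋯.∃rₙ.⊤` exactly at the points `≥ n`.
-/

namespace Concept

variable {Cn R : Type}

lemma names_finite (c : Concept Cn R) : c.names.Finite := by
  induction c <;> simp_all [names]

lemma roles_finite (c : Concept Cn R) : c.roles.Finite := by
  induction c <;> simp_all [roles]

lemma names_subset_of_mem_sub {c d : Concept Cn R} (h : d ∈ c.sub) : d.names ⊆ c.names := by
  induction c with
  | top | bot | name => simp_all [sub]
  | neg c ih | ex _ c ih | all _ c ih =>
    rcases h with rfl | h
    · exact subset_rfl
    · exact ih h
  | conj c d ihc ihd | disj c d ihc ihd =>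
    rcases h with rfl | h | h
    · exact subset_rfl
    · exact (ihc h).trans Set.subset_union_left
    · exact (ihd h).trans Set.subset_union_right

lemma roles_subset_of_mem_sub {c d : Concept Cn R} (h : d ∈ c.sub) : d.roles ⊆ c.roles := by
  induction c with
  | top | bot | name => simp_all [sub]
  | neg c ih =>
    rcases h with rfl | h
    · exact subset_rfl
    · exact ih h
  | ex _ c ih | all _ c ih =>
    rcases h with rfl | h
    · exact subset_rfl
    · exact (ih h).trans (Set.subset_insert _ _)
  | conj c d ihc ihd | disj c d ihc ihd =>
    rcases h with rfl | h | h
    · exact subset_rfl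
    · exact (ihc h).trans Set.subset_union_left
    · exact (ihd h).trans Set.subset_union_right

lemma isELU_of_mem_sub {c d : Concept Cn R} (h : d ∈ c.sub) (hc : c.isELU) : d.isELU := by
  induction c with
  | top | bot | name => simp_all [sub]
  | neg | all => exact hc.elim
  | ex _ c ih =>
    rcases h with rfl | h
    · exact hc
    · exact ih h hc
  | conj c d ihc ihd | disj c d ihc ihd =>
    rcases h with rfl | h | h
    · exact hc
    · exact ihc h hc.1
    · exact ihd h hc.2

end Concept

section Signature

variable {Cn R : Type}

lemma sigC_finite {O : Ontology Cn R} (hfin : O.Finite) : (sigC O).Finite :=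
  (hfin.biUnion fun ci _ => ci.1.names_finite.union ci.2.names_finite).subset
    fun _ ⟨_, hci, hA⟩ => Set.mem_biUnion hci hA

lemma sigR_finite {O : Ontology Cn R} (hfin : O.Finite) : (sigR O).Finite :=
  (hfin.biUnion fun ci _ => ci.1.roles_finite.union ci.2.roles_finite).subset
    fun _ ⟨_, hci, hr⟩ => Set.mem_biUnion hci hr

def sigI (NS : Set Cn) (RS : Set R) : Interp Cn R :=
  ⟨Unit, fun A => {_u | A ∈ NS}, fun r => {_p | r ∈ RS}⟩

lemma mem_sigI_interp_of_isELU {NS : Set Cn} {RS : Set R} {C : Concept Cn R}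
    (hC : C.isELU) (hN : C.names ⊆ NS) (hR : C.roles ⊆ RS) :
    () ∈ (sigI NS RS).interp C := by
  induction C with
  | top => trivial
  | name A => exact hN rfl
  | conj c d ihc ihd =>
    exact ⟨ihc hC.1 (fun _ h => hN (Or.inl h)) (fun _ h => hR (Or.inl h)),
      ihd hC.2 (fun _ h => hN (Or.inr h)) (fun _ h => hR (Or.inr h))⟩
  | disj c d ihc _ =>
    exact Or.inl (ihc hC.1 (fun _ h => hN (Or.inl h)) (fun _ h => hR (Or.inl h)))
  | ex r c ih =>
    exact ⟨(), hR (Set.mem_insert r _), ih hC hN fun _ h => hR (Set.mem_insert_of_mem r h)⟩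
  | bot | neg | all => exact hC.elim

lemma signature_subset_of_mem_sigI_interp {NS : Set Cn} {RS : Set R} {C : Concept Cn R}
    (hC : C.isEL) (h : () ∈ (sigI NS RS).interp C) : C.names ⊆ NS ∧ C.roles ⊆ RS := by
  induction C with
  | top => exact ⟨Set.empty_subset _, Set.empty_subset _⟩
  | name A => exact ⟨Set.singleton_subset_iff.2 h, Set.empty_subset _⟩
  | conj c d ihc ihd =>
    obtain ⟨hNc, hRc⟩ := ihc hC.1 h.1
    obtain ⟨hNd, hRd⟩ := ihd hC.2 h.2
    exact ⟨Set.union_subset hNc hNd, Set.union_subset hRc hRd⟩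
  | ex r c ih =>
    obtain ⟨⟨⟩, hr, hc⟩ := h
    obtain ⟨hN, hR⟩ := ih hC hc
    exact ⟨hN, Set.insert_subset hr hR⟩
  | bot | neg | disj | all => exact hC.elim

lemma sigI_isModel {O : Ontology Cn R} (hO : ∀ ci ∈ O, ci.2.isELU) :
    (sigI (sigC O) (sigR O)).isModel O := fun ci hci () _ =>
  mem_sigI_interp_of_isELU (hO ci hci) (fun _ h => ⟨ci, hci, Or.inr h⟩)
    (fun _ h => ⟨ci, hci, Or.inr h⟩)

lemma signature_subset_of_entails {O : Ontology Cn R} (hO : ∀ ci ∈ O, ci.2.isELU)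
    {D C : Concept Cn R} (hD : D.isELU) (hDN : D.names ⊆ sigC O) (hDR : D.roles ⊆ sigR O)
    (hC : C.isEL) (h : entails O D C) : C.names ⊆ sigC O ∧ C.roles ⊆ sigR O :=
  signature_subset_of_mem_sigI_interp hC <|
    h _ (sigI_isModel hO) (mem_sigI_interp_of_isELU hD hDN hDR)

lemma signature_subset_of_generatable {O : Ontology Cn R} (hO : ∀ ci ∈ O, ci.2.isELU)
    {C : Concept Cn R} (hC : C.isEL) (h : generatable O C) :
    C.names ⊆ sigC O ∧ C.roles ⊆ sigR O := by
  obtain ⟨r, D, ⟨ci, hci, hsub⟩, hDC⟩ := h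
  refine signature_subset_of_entails hO ?_ ?_ ?_ hC hDC
  · exact (Concept.isELU_of_mem_sub hsub (hO ci hci) : (Concept.ex r D).isELU)
  · exact (Concept.names_subset_of_mem_sub (d := .ex r D) hsub).trans
      fun _ h => ⟨ci, hci, Or.inr h⟩
  · exact ((Set.subset_insert r _).trans (Concept.roles_subset_of_mem_sub hsub)).trans
      fun _ h => ⟨ci, hci, Or.inr h⟩

end Signature

section Semantics

variable {Cn R : Type}

def sem (C : Concept Cn R) : (I : Interp Cn R) → Set I.Dom := fun I => I.interp C

def exSem (r : R) (s : (I : Interp Cn R) → Set I.Dom) : (I : Interp Cn R) → Set I.Dom :=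
  fun I => {x | ∃ y, (x, y) ∈ I.rI r ∧ y ∈ s I}

lemma lequiv_iff_sem_eq {C D : Concept Cn R} : lequiv C D ↔ sem C = sem D := by
  refine ⟨fun h => funext fun I => (h.1 I fun _ h => h.elim).antisymm (h.2 I fun _ h => h.elim),
    fun h => ⟨fun I _ => (congrFun h I).le, fun I _ => (congrFun h I).ge⟩⟩

def boundedEL (NS : Set Cn) (RS : Set R) (n : ℕ) : Set (Concept Cn R) :=
  {C | C.isEL ∧ C.names ⊆ NS ∧ C.roles ⊆ RS ∧ C.depth < n}

-- Conjunction is `⊓` in the pointwise lattice `(I : Interp Cn R) → Set I.Dom`.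
lemma sem_mem_sInf_image_powerset {NS : Set Cn} {RS : Set R} {n : ℕ} {C : Concept Cn R}
    (hC : C.isEL) (hN : C.names ⊆ NS) (hR : C.roles ⊆ RS) (hd : C.depth < n + 1) :
    sem C ∈ sInf '' 𝒫 ((fun A => sem (.name A)) '' NS ∪
      Set.image2 exSem RS (sem '' boundedEL NS RS n)) := by
  induction C with
  | top => exact ⟨∅, Set.empty_subset _, sInf_empty⟩
  | name A => exact ⟨{sem (.name A)}, Set.singleton_subset_iff.2 (Or.inl ⟨A, hN rfl, rfl⟩),
      sInf_singleton⟩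
  | conj c d ihc ihd =>
    obtain ⟨s, hs, hsc⟩ := ihc hC.1 (fun _ h => hN (Or.inl h)) (fun _ h => hR (Or.inl h))
      (lt_of_le_of_lt (le_max_left _ _) hd)
    obtain ⟨t, ht, htd⟩ := ihd hC.2 (fun _ h => hN (Or.inr h)) (fun _ h => hR (Or.inr h))
      (lt_of_le_of_lt (le_max_right _ _) hd)
    exact ⟨s ∪ t, Set.union_subset hs ht, by rw [sInf_union, hsc, htd]; rfl⟩
  | ex r c _ =>
    refine ⟨{sem (.ex r c)}, Set.singleton_subset_iff.2 (Or.inr ?_), sInf_singleton⟩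
    exact ⟨r, hR (Set.mem_insert r _), sem c,
      ⟨c, ⟨hC, hN, fun _ h => hR (Set.mem_insert_of_mem r h), Nat.lt_of_succ_lt_succ hd⟩, rfl⟩, rfl⟩
  | bot | neg | disj | all => exact hC.elim

lemma finite_sem_image_boundedEL {NS : Set Cn} {RS : Set R} (hNS : NS.Finite)
    (hRS : RS.Finite) (n : ℕ) : (sem '' boundedEL NS RS n).Finite := by
  induction n with
  | zero => exact Set.finite_empty.subset fun _ ⟨_, hC, _⟩ => absurd hC.2.2.2 (Nat.not_lt_zero _)
  | succ n ih =>
    exact (((hNS.image _).union (hRS.image2 _ ih)).finite_subsets.image sInf).subset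
      fun _ ⟨_, hC, hsem⟩ => hsem ▸ sem_mem_sInf_image_powerset hC.1 hC.2.1 hC.2.2.1 hC.2.2.2

lemma exists_le_depth_of_not_lequiv {NS : Set Cn} {RS : Set R} (hNS : NS.Finite)
    (hRS : RS.Finite) {f : ℕ → Concept Cn R} (hEL : ∀ k, (f k).isEL)
    (hN : ∀ k, (f k).names ⊆ NS) (hR : ∀ k, (f k).roles ⊆ RS)
    (hf : ∀ k l, k ≠ l → ¬ lequiv (f k) (f l)) (n : ℕ) : ∃ k, n ≤ (f k).depth := by
  by_contra! hshallow
  obtain ⟨k, l, hkl, hsem⟩ :=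
    (finite_sem_image_boundedEL hNS hRS n).exists_lt_map_eq_of_forall_mem (f := sem ∘ f)
      fun k => Set.mem_image_of_mem sem
        (show f k ∈ boundedEL NS RS n from ⟨hEL k, hN k, hR k, hshallow k⟩)
  exact hf k l hkl.ne (lequiv_iff_sem_eq.2 hsem)

end Semantics

section Chains

variable {Cn R : Type}

lemma isEL_exChain (rs : List R) : (exChain rs : Concept Cn R).isEL := by
  induction rs with
  | nil => trivial
  | cons _ _ ih => exact ih

lemma entails_trans_s5 {O : Ontology Cn R} {C D E : Concept Cn R} (hCD : entails O C D)
    (hDE : entails O D E) : entails O C E :=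
  fun I hI => (hCD I hI).trans (hDE I hI)

lemma exists_exChain_of_le_depth (O : Ontology Cn R) {C : Concept Cn R} (hC : C.isEL)
    {n : ℕ} (hn : n ≤ C.depth) :
    ∃ rs : List R, rs.length = n ∧ (∀ s ∈ rs, s ∈ C.roles) ∧ entails O C (exChain rs) := by
  induction C generalizing n with
  | top | name => exact ⟨[], (Nat.le_zero.1 hn).symm, by simp, fun _ _ _ _ => trivial⟩
  | conj c d ihc ihd =>
    rcases le_max_iff.1 hn with hc | hd
    · obtain ⟨rs, hlen, hroles, hent⟩ := ihc hC.1 hc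
      exact ⟨rs, hlen, fun s hs => Or.inl (hroles s hs), fun I hI _ hx => hent I hI hx.1⟩
    · obtain ⟨rs, hlen, hroles, hent⟩ := ihd hC.2 hd
      exact ⟨rs, hlen, fun s hs => Or.inr (hroles s hs), fun I hI _ hx => hent I hI hx.2⟩
  | ex r c ih =>
    cases n with
    | zero => exact ⟨[], rfl, by simp, fun _ _ _ _ => trivial⟩
    | succ n =>
      obtain ⟨rs, hlen, hroles, hent⟩ := ih hC (Nat.le_of_succ_le_succ hn)
      refine ⟨r :: rs, by simp [hlen], ?_, fun I hI _ ⟨y, hxy, hy⟩ => ⟨y, hxy, hent I hI hy⟩⟩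
      simpa [Concept.roles] using fun s hs => Or.inr (hroles s hs)
  | bot | neg | disj | all => exact hC.elim

def predI (Cn R : Type) : Interp Cn R :=
  ⟨ℕ, fun _ => ∅, fun _ => {p | p.2 + 1 = p.1}⟩

lemma mem_predI_interp_exChain_iff (rs : List R) (x : ℕ) :
    x ∈ (predI Cn R).interp (exChain rs) ↔ rs.length ≤ x := by
  induction rs generalizing x with
  | nil => exact iff_of_true trivial (Nat.zero_le x)
  | cons r rs ih =>
    show (∃ y, y + 1 = x ∧ y ∈ (predI Cn R).interp (exChain rs)) ↔ rs.length + 1 ≤ x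
    simp only [ih]
    exact ⟨fun ⟨y, hyx, hy⟩ => by omega, fun h => ⟨x - 1, by omega, by omega⟩⟩

lemma length_eq_of_lequiv_exChain {rs rs' : List R}
    (h : lequiv (exChain rs : Concept Cn R) (exChain rs')) : rs.length = rs'.length := by
  have hle (x : ℕ) : rs.length ≤ x ↔ rs'.length ≤ x := by
    rw [← mem_predI_interp_exChain_iff (Cn := Cn), ← mem_predI_interp_exChain_iff (Cn := Cn)]
    exact Set.ext_iff.1 (congrFun (lequiv_iff_sem_eq.1 h) (predI Cn R)) x
  exact le_antisymm ((hle _).2 le_rfl) ((hle _).1 le_rfl)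

end Chains

theorem stmt5 {Cn R : Type} (O : Ontology Cn R) (hfin : O.Finite)
    (hO : ∀ ci ∈ O, ci.1.isELU ∧ ci.2.isELU) :
    (∃ f : ℕ → Concept Cn R,
        (∀ n, (f n).isEL ∧ generatable O (f n)) ∧
        ∀ n m, n ≠ m → ¬ lequiv (f n) (f m)) ↔
    (∀ n : ℕ, ∃ (r : R) (D : Concept Cn R) (rs : List R),
        rs.length = n ∧ (∀ s ∈ rs, s ∈ sigR O) ∧
        (∃ ci ∈ O, Concept.ex r D ∈ ci.2.sub) ∧
        entails O D (exChain rs)) := by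
  have hOR : ∀ ci ∈ O, ci.2.isELU := fun ci hci => (hO ci hci).2
  constructor
  · rintro ⟨f, hf, hne⟩ n
    have hsig k := signature_subset_of_generatable hOR (hf k).1 (hf k).2
    obtain ⟨k, hk⟩ := exists_le_depth_of_not_lequiv (sigC_finite hfin) (sigR_finite hfin)
      (fun k => (hf k).1) (fun k => (hsig k).1) (fun k => (hsig k).2) hne n
    obtain ⟨r, D, hsub, hD⟩ := (hf k).2
    obtain ⟨rs, hlen, hroles, hchain⟩ := exists_exChain_of_le_depth O (hf k).1 hk
    exact ⟨r, D, rs, hlen, fun s hs => (hsig k).2 (hroles s hs), hsub, entails_trans_s5 hD hchain⟩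
  · intro h
    choose r D rs hlen _ hsub hent using h
    refine ⟨fun n => exChain (rs n), fun n => ⟨isEL_exChain _, r n, D n, hsub n, hent n⟩,
      fun n m hnm heq => hnm ?_⟩
    rw [← hlen n, ← hlen m]
    exact length_eq_of_lequiv_exChain heq
end DL
end

section
/- Let O be a finite ELU ontology. If there exist n > |sig(O)| · 2^(2^||O||), a concept ∃r.D ∈ sub(O) on the right-hand side of an inclusion in O, and role names r₁,…,rₙ from O such that O ⊨ D ⊑ ∃r₁.⋯.∃rₙ.⊤, then for every m there exist such a concept and a role sequence of length ≥ m with the same property. Consequently it is decidable whether a given ELU ontology is finitely generating. -/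
namespace DL

namespace Concept
variable {Cn R : Type} [DecidableEq Cn] [DecidableEq R]

/-- concept names of a concept, as a finset. -/
def namesF : Concept Cn R → Finset Cn
  | top => ∅
  | bot => ∅
  | name A => {A}
  | neg c => c.namesF
  | conj c d => c.namesF ∪ d.namesF
  | disj c d => c.namesF ∪ d.namesF
  | ex _ c => c.namesF
  | all _ c => c.namesF

/-- role names of a concept, as a finset. -/
def rolesF : Concept Cn R → Finset R
  | top => ∅
  | bot => ∅
  | name _ => ∅
  | neg c => c.rolesF
  | conj c d => c.rolesF ∪ d.rolesF
  | disj c d => c.rolesF ∪ d.rolesF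
  | ex r c => insert r c.rolesF
  | all r c => insert r c.rolesF

end Concept

/-- number of concept and role names occurring in a finite ontology, i.e. |sig(O)|. -/
def sigCard {Cn R : Type} [DecidableEq Cn] [DecidableEq R]
    (O : Finset (Concept Cn R × Concept Cn R)) : ℕ :=
  (O.biUnion fun ci => ci.1.namesF ∪ ci.2.namesF).card +
  (O.biUnion fun ci => ci.1.rolesF ∪ ci.2.rolesF).card

/-- the size ||O|| of a finite ontology. -/
def sizeOnt {Cn R : Type} [DecidableEq Cn] [DecidableEq R]
    (O : Finset (Concept Cn R × Concept Cn R)) : ℕ :=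
  O.sum fun ci => ci.1.size + ci.2.size


/-!
Let `F` be the subconcepts of `O` and call the set of members of `F` satisfied by an element its
type. If every element of type `t` satisfies `∃s.G`, then every element `x` of type `t` has an
`s`-successor whose type alone forces `G`: otherwise, replacing each `s`-successor of `x` by the
root of a counter-model of the same type changes no type, so the result is a model of `O` in which
`x` violates `∃s.G`. Hence, if `𝒳 w` is the set of types forcing `∃w.⊤`, every element with type in
`𝒳 (s :: w)` has an `s`-successor with type in `𝒳 w`. There are at most `2 ^ 2 ^ ‖O‖` such sets,
so among the `n + 1` suffixes of `r₁ ⋯ rₙ` two, `w` and `v ++ w` with `v ≠ []`, share the same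
set, and the factor `v` can be repeated any number of times.
-/

namespace Concept

variable {Cn R : Type} [DecidableEq R]

theorem mem_rolesF {c : Concept Cn R} {r : R} : r ∈ c.rolesF ↔ r ∈ c.roles := by
  induction c <;> simp_all [rolesF, roles]

variable [DecidableEq Cn]

def subF : Concept Cn R → Finset (Concept Cn R)
  | top => {top}
  | bot => {bot}
  | name A => {name A}
  | neg c => insert (neg c) c.subF
  | conj c d => insert (conj c d) (c.subF ∪ d.subF)
  | disj c d => insert (disj c d) (c.subF ∪ d.subF)
  | ex r c => insert (ex r c) c.subF
  | all r c => insert (all r c) c.subF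

theorem mem_subF {c d : Concept Cn R} : d ∈ c.subF ↔ d ∈ c.sub := by
  induction c <;> simp_all [subF, sub]

@[simp]
theorem mem_subF_self (c : Concept Cn R) : c ∈ c.subF := by
  cases c <;> simp [subF]

theorem subF_subset_of_mem {c d : Concept Cn R} (h : d ∈ c.subF) : d.subF ⊆ c.subF := by
  induction c with
  | top | bot | name => simp_all [subF]
  | neg c ih | ex _ c ih | all _ c ih =>
    rcases Finset.mem_insert.1 h with rfl | h
    · rfl
    · exact (ih h).trans (Finset.subset_insert _ _)
  | conj c c' ih ih' | disj c c' ih ih' =>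
    rcases Finset.mem_insert.1 h with rfl | h
    · rfl
    · refine Finset.Subset.trans ?_ (Finset.subset_insert _ _)
      rcases Finset.mem_union.1 h with h | h
      · exact (ih h).trans Finset.subset_union_left
      · exact (ih' h).trans Finset.subset_union_right

theorem card_subF_le_size (c : Concept Cn R) : c.subF.card ≤ c.size := by
  induction c with
  | top | bot | name => simp [subF, size]
  | neg c ih | ex _ c ih | all _ c ih =>
    simp only [subF, size]
    exact (Finset.card_insert_le _ _).trans (by omega)
  | conj c d ih ih' | disj c d ih ih' =>
    simp only [subF, size]
    have := Finset.card_union_le c.subF d.subF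
    exact (Finset.card_insert_le _ _).trans (by omega)

end Concept

namespace Interp

variable {Cn R : Type} {I : Interp Cn R}

def Path (I : Interp Cn R) : List R → I.Dom → I.Dom → Prop
  | [], x, y => x = y
  | r :: l, x, y => ∃ z, (x, z) ∈ I.rI r ∧ I.Path l z y

theorem Path.append {u v : List R} {x y z : I.Dom} (hu : I.Path u x y) (hv : I.Path v y z) :
    I.Path (u ++ v) x z := by
  induction u generalizing x with
  | nil => exact (hu : x = y) ▸ hv
  | cons r u ih =>
    obtain ⟨x', hx', hu⟩ := hu
    exact ⟨x', hx', ih hu⟩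

theorem Path.mem_interp_exChain {l : List R} {x y : I.Dom} (h : I.Path l x y) :
    x ∈ I.interp (exChain l) := by
  induction l generalizing x with
  | nil => trivial
  | cons r l ih =>
    obtain ⟨x', hx', h⟩ := h
    exact ⟨x', hx', ih h⟩

theorem mem_ex_all_iff_of_zigzag {I' : Interp Cn R} {x : I.Dom} {x' : I'.Dom} {r : R}
    {c : Concept Cn R}
    (forth : ∀ y, (x, y) ∈ I.rI r → ∃ y', (x', y') ∈ I'.rI r ∧ (y ∈ I.interp c ↔ y' ∈ I'.interp c))
    (back : ∀ y', (x', y') ∈ I'.rI r → ∃ y, (x, y) ∈ I.rI r ∧ (y ∈ I.interp c ↔ y' ∈ I'.interp c)) :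
    (x ∈ I.interp (.ex r c) ↔ x' ∈ I'.interp (.ex r c)) ∧
      (x ∈ I.interp (.all r c) ↔ x' ∈ I'.interp (.all r c)) := by
  refine ⟨⟨fun ⟨y, hy, hc⟩ => ?_, fun ⟨y', hy', hc⟩ => ?_⟩, ⟨fun h y' hy' => ?_, fun h y hy => ?_⟩⟩
  · obtain ⟨y', hy', hiff⟩ := forth y hy
    exact ⟨y', hy', hiff.1 hc⟩
  · obtain ⟨y, hy, hiff⟩ := back y' hy'
    exact ⟨y, hy, hiff.2 hc⟩
  · obtain ⟨y, hy, hiff⟩ := back y' hy'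
    exact hiff.1 (h y hy)
  · obtain ⟨y', hy', hiff⟩ := forth y hy
    exact hiff.2 (h y' hy')

end Interp

section Types

variable {Cn R : Type}

open Classical in
noncomputable def tyF (F : Finset (Concept Cn R)) (I : Interp Cn R) (x : I.Dom) :
    Finset (Concept Cn R) :=
  F.filter (x ∈ I.interp ·)

open Classical in
theorem mem_tyF {F : Finset (Concept Cn R)} {I : Interp Cn R} {x : I.Dom} {c : Concept Cn R} :
    c ∈ tyF F I x ↔ c ∈ F ∧ x ∈ I.interp c :=
  Finset.mem_filter

theorem tyF_subset (F : Finset (Concept Cn R)) (I : Interp Cn R) (x : I.Dom) : tyF F I x ⊆ F :=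
  fun _ h => (mem_tyF.1 h).1

theorem mem_interp_iff_of_tyF_eq {F : Finset (Concept Cn R)} {I J : Interp Cn R} {x : I.Dom}
    {y : J.Dom} (h : tyF F I x = tyF F J y) {c : Concept Cn R} (hc : c ∈ F) :
    x ∈ I.interp c ↔ y ∈ J.interp c := by
  simpa [mem_tyF, hc] using congrArg (c ∈ ·) h

def TypeEntails (F : Finset (Concept Cn R)) (O : Ontology Cn R) (t : Finset (Concept Cn R))
    (G : Concept Cn R) : Prop :=
  ∀ I : Interp Cn R, I.isModel O → ∀ x, tyF F I x = t → x ∈ I.interp G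

end Types

namespace Interp

variable {Cn R : Type} (I : Interp Cn R) (x : I.Dom) (s : R)
  (J : {y // (x, y) ∈ I.rI s} → Interp Cn R) (z : ∀ y, (J y).Dom)

inductive GraftRel : R → (I.Dom ⊕ Σ y, (J y).Dom) → (I.Dom ⊕ Σ y, (J y).Dom) → Prop
  | old {p a b} : (a, b) ∈ I.rI p → ¬(p = s ∧ a = x) → GraftRel p (.inl a) (.inl b)
  | new (y) : GraftRel s (.inl x) (.inr ⟨y, z y⟩)
  | copy {p y e e'} : (e, e') ∈ (J y).rI p → GraftRel p (.inr ⟨y, e⟩) (.inr ⟨y, e'⟩)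

/-- `I` with the `s`-successors `y` of `x` replaced by the roots `z y` of disjoint copies of the
interpretations `J y`. -/
abbrev graft : Interp Cn R where
  Dom := I.Dom ⊕ Σ y, (J y).Dom
  cI A := {d | Sum.elim (· ∈ I.cI A) (fun q => q.2 ∈ (J q.1).cI A) d}
  rI p := {q | GraftRel I x s J z p q.1 q.2}

variable {I x s J z}

theorem graft_rel_inr {p : R} {y} {e : (J y).Dom} {w : (I.graft x s J z).Dom} :
    (.inr ⟨y, e⟩, w) ∈ (I.graft x s J z).rI p ↔ ∃ e', w = .inr ⟨y, e'⟩ ∧ (e, e') ∈ (J y).rI p := by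
  constructor
  · rintro (_ | _ | ⟨h⟩)
    exact ⟨_, rfl, h⟩
  · rintro ⟨e', rfl, h⟩
    exact .copy h

theorem graft_rel_inl_of_ne {p : R} {a : I.Dom} (h : ¬(p = s ∧ a = x))
    {w : (I.graft x s J z).Dom} :
    (.inl a, w) ∈ (I.graft x s J z).rI p ↔ ∃ b, w = .inl b ∧ (a, b) ∈ I.rI p := by
  constructor
  · rintro (⟨hab, -⟩ | _)
    · exact ⟨_, rfl, hab⟩
    · exact absurd ⟨rfl, rfl⟩ h
  · rintro ⟨b, rfl, hab⟩
    exact .old hab h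

theorem graft_rel_root {w : (I.graft x s J z).Dom} :
    (.inl x, w) ∈ (I.graft x s J z).rI s ↔ ∃ y, w = .inr ⟨y, z y⟩ := by
  constructor
  · rintro (⟨-, h⟩ | y)
    · exact absurd ⟨rfl, rfl⟩ h
    · exact ⟨y, rfl⟩
  · rintro ⟨y, rfl⟩
    exact .new y

theorem graft_inr_ex_all_iff {p : R} {c : Concept Cn R} {y} {e : (J y).Dom}
    (hc : ∀ e' : (J y).Dom, .inr ⟨y, e'⟩ ∈ (I.graft x s J z).interp c ↔ e' ∈ (J y).interp c) :
    (.inr ⟨y, e⟩ ∈ (I.graft x s J z).interp (.ex p c) ↔ e ∈ (J y).interp (.ex p c)) ∧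
      (.inr ⟨y, e⟩ ∈ (I.graft x s J z).interp (.all p c) ↔ e ∈ (J y).interp (.all p c)) :=
  mem_ex_all_iff_of_zigzag
    (fun _ hw => by
      obtain ⟨e', rfl, he⟩ := graft_rel_inr.1 hw
      exact ⟨e', he, hc e'⟩)
    (fun e' he => ⟨_, graft_rel_inr.2 ⟨e', rfl, he⟩, hc e'⟩)

theorem mem_graft_interp_inr (C : Concept Cn R) {y} {e : (J y).Dom} :
    .inr ⟨y, e⟩ ∈ (I.graft x s J z).interp C ↔ e ∈ (J y).interp C := by
  induction C generalizing e with
  | top | bot | name => rfl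
  | neg c ih => exact not_congr ih
  | conj c d ih ih' => exact and_congr ih ih'
  | disj c d ih ih' => exact or_congr ih ih'
  | ex p c ih => exact (graft_inr_ex_all_iff fun _ => ih).1
  | all p c ih => exact (graft_inr_ex_all_iff fun _ => ih).2

variable {F : Finset (Concept Cn R)}

theorem graft_inl_ex_all_iff (hty : ∀ y, tyF F (J y) (z y) = tyF F I y) {p : R}
    {c : Concept Cn R} (hcF : c ∈ F)
    (hc : ∀ b : I.Dom, .inl b ∈ (I.graft x s J z).interp c ↔ b ∈ I.interp c) (a : I.Dom) :
    (.inl a ∈ (I.graft x s J z).interp (.ex p c) ↔ a ∈ I.interp (.ex p c)) ∧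
      (.inl a ∈ (I.graft x s J z).interp (.all p c) ↔ a ∈ I.interp (.all p c)) := by
  by_cases hroot : p = s ∧ a = x
  · obtain ⟨rfl, rfl⟩ := hroot
    have hsucc (y : {y // (a, y) ∈ I.rI p}) :
        .inr ⟨y, z y⟩ ∈ (I.graft a p J z).interp c ↔ y.1 ∈ I.interp c :=
      (mem_graft_interp_inr c).trans (mem_interp_iff_of_tyF_eq (hty y) hcF)
    refine mem_ex_all_iff_of_zigzag (fun _ hw => ?_) (fun b hb => ?_)
    · obtain ⟨y, rfl⟩ := graft_rel_root.1 hw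
      exact ⟨y, y.2, hsucc y⟩
    · exact ⟨_, graft_rel_root.2 ⟨⟨b, hb⟩, rfl⟩, hsucc ⟨b, hb⟩⟩
  · refine mem_ex_all_iff_of_zigzag (fun _ hw => ?_) (fun b hb => ?_)
    · obtain ⟨b, rfl, hb⟩ := (graft_rel_inl_of_ne hroot).1 hw
      exact ⟨b, hb, hc b⟩
    · exact ⟨_, (graft_rel_inl_of_ne hroot).2 ⟨b, rfl, hb⟩, hc b⟩

variable [DecidableEq Cn] [DecidableEq R]

theorem mem_graft_interp_inl (hty : ∀ y, tyF F (J y) (z y) = tyF F I y) {C : Concept Cn R}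
    (hC : C.subF ⊆ F) {a : I.Dom} : .inl a ∈ (I.graft x s J z).interp C ↔ a ∈ I.interp C := by
  have child {c D : Concept Cn R} (h : c ∈ D.subF) (hD : D.subF ⊆ F) : c.subF ⊆ F :=
    (Concept.subF_subset_of_mem h).trans hD
  induction C generalizing a with
  | top | bot | name => rfl
  | neg c ih => exact not_congr (ih (child (by simp [Concept.subF]) hC))
  | conj c d ih ih' =>
    exact and_congr (ih (child (by simp [Concept.subF]) hC))
      (ih' (child (by simp [Concept.subF]) hC))
  | disj c d ih ih' =>
    exact or_congr (ih (child (by simp [Concept.subF]) hC))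
      (ih' (child (by simp [Concept.subF]) hC))
  | ex p c ih =>
    have hcF : c.subF ⊆ F := child (by simp [Concept.subF]) hC
    exact (graft_inl_ex_all_iff hty (hcF c.mem_subF_self) (fun _ => ih hcF) a).1
  | all p c ih =>
    have hcF : c.subF ⊆ F := child (by simp [Concept.subF]) hC
    exact (graft_inl_ex_all_iff hty (hcF c.mem_subF_self) (fun _ => ih hcF) a).2

theorem graft_isModel {O : Ontology Cn R} (hI : I.isModel O) (hJ : ∀ y, (J y).isModel O)
    (hty : ∀ y, tyF F (J y) (z y) = tyF F I y) (hOF : ∀ ci ∈ O, ci.1.subF ⊆ F ∧ ci.2.subF ⊆ F) :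
    (I.graft x s J z).isModel O := by
  rintro ci hci (a | ⟨y, e⟩) hd
  · exact (mem_graft_interp_inl hty (hOF ci hci).2).2
      (hI ci hci ((mem_graft_interp_inl hty (hOF ci hci).1).1 hd))
  · exact (mem_graft_interp_inr _).2 (hJ y ci hci ((mem_graft_interp_inr _).1 hd))

theorem tyF_graft_inl (hF : ∀ C ∈ F, C.subF ⊆ F) (hty : ∀ y, tyF F (J y) (z y) = tyF F I y)
    (a : I.Dom) : tyF F (I.graft x s J z) (.inl a) = tyF F I a := by
  ext c
  simp only [mem_tyF, and_congr_right_iff]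
  exact fun hc => mem_graft_interp_inl hty (hF c hc)

end Interp

section Pumping

variable {Cn R : Type} {F : Finset (Concept Cn R)} {O : Ontology Cn R}

theorem exists_succ_typeEntails [DecidableEq Cn] [DecidableEq R] (hF : ∀ C ∈ F, C.subF ⊆ F)
    (hOF : ∀ ci ∈ O, ci.1 ∈ F ∧ ci.2 ∈ F) {I : Interp Cn R} (hI : I.isModel O) {x : I.Dom}
    {s : R} {G : Concept Cn R} (H : TypeEntails F O (tyF F I x) (.ex s G)) :
    ∃ y, (x, y) ∈ I.rI s ∧ TypeEntails F O (tyF F I y) G := by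
  by_contra! hno
  have counter (y : {y // (x, y) ∈ I.rI s}) :
      ∃ (J : Interp Cn R) (z : J.Dom), J.isModel O ∧ tyF F J z = tyF F I y ∧ z ∉ J.interp G := by
    simpa [TypeEntails] using hno y y.2
  choose J z hJ hty hzG using counter
  have hmodel := Interp.graft_isModel hI hJ hty fun ci hci =>
    ⟨hF _ (hOF ci hci).1, hF _ (hOF ci hci).2⟩
  obtain ⟨w, hw, hG⟩ := H _ hmodel (.inl x) (Interp.tyF_graft_inl hF hty x)
  obtain ⟨y, rfl⟩ := Interp.graft_rel_root.1 hw
  exact hzG y ((Interp.mem_graft_interp_inr G).1 hG)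

open Classical in
noncomputable def entailingTypes (F : Finset (Concept Cn R)) (O : Ontology Cn R)
    (G : Concept Cn R) : Finset (Finset (Concept Cn R)) :=
  F.powerset.filter (TypeEntails F O · G)

open Classical in
theorem mem_entailingTypes {G : Concept Cn R} {t : Finset (Concept Cn R)} :
    t ∈ entailingTypes F O G ↔ t ⊆ F ∧ TypeEntails F O t G := by
  rw [entailingTypes, Finset.mem_filter, Finset.mem_powerset]

theorem entailingTypes_mem_powerset (G : Concept Cn R) :
    entailingTypes F O G ∈ F.powerset.powerset :=
  Finset.mem_powerset.2 fun _ ht => Finset.mem_powerset.2 (mem_entailingTypes.1 ht).1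

theorem tyF_mem_entailingTypes {D G : Concept Cn R} (hD : D ∈ F) (hDG : entails O D G)
    {I : Interp Cn R} {x : I.Dom} (hx : x ∈ I.interp D) : tyF F I x ∈ entailingTypes F O G :=
  mem_entailingTypes.2 ⟨tyF_subset F I x, fun J hJ _ hy =>
    hDG J hJ ((mem_interp_iff_of_tyF_eq hy hD).2 hx)⟩

def TypePath (F : Finset (Concept Cn R)) (O : Ontology Cn R) (T : Finset (Finset (Concept Cn R)))
    (w : List R) (T' : Finset (Finset (Concept Cn R))) : Prop :=
  ∀ I : Interp Cn R, I.isModel O → ∀ x, tyF F I x ∈ T → ∃ y, I.Path w x y ∧ tyF F I y ∈ T'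

theorem TypePath.append {T T' T'' : Finset (Finset (Concept Cn R))} {u v : List R}
    (hu : TypePath F O T u T') (hv : TypePath F O T' v T'') : TypePath F O T (u ++ v) T'' := by
  intro I hI x hx
  obtain ⟨y, hxy, hy⟩ := hu I hI x hx
  obtain ⟨y', hyy', hy'⟩ := hv I hI y hy
  exact ⟨y', hxy.append hyy', hy'⟩

theorem TypePath.flatten_replicate {T : Finset (Finset (Concept Cn R))} {v : List R}
    (h : TypePath F O T v T) (m : ℕ) : TypePath F O T (List.replicate m v).flatten T := by
  induction m with
  | zero => exact fun I _ x hx => ⟨x, rfl, hx⟩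
  | succ m ih => simpa [List.replicate_succ] using h.append ih

variable [DecidableEq Cn] [DecidableEq R]

theorem typePath_entailingTypes (hF : ∀ C ∈ F, C.subF ⊆ F) (hOF : ∀ ci ∈ O, ci.1 ∈ F ∧ ci.2 ∈ F)
    (u w : List R) :
    TypePath F O (entailingTypes F O (exChain (u ++ w))) u (entailingTypes F O (exChain w)) := by
  induction u with
  | nil => exact fun I _ x hx => ⟨x, rfl, hx⟩
  | cons s u ih =>
    intro I hI x hx
    obtain ⟨y, hxy, hy⟩ := exists_succ_typeEntails hF hOF hI (mem_entailingTypes.1 hx).2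
    obtain ⟨y', hyy', hy'⟩ := ih I hI y (mem_entailingTypes.2 ⟨tyF_subset F I y, hy⟩)
    exact ⟨y', ⟨y, hxy, hyy'⟩, hy'⟩

theorem entails_exChain_pump (hF : ∀ C ∈ F, C.subF ⊆ F) (hOF : ∀ ci ∈ O, ci.1 ∈ F ∧ ci.2 ∈ F)
    {D : Concept Cn R} (hD : D ∈ F) {u v w : List R} (hent : entails O D (exChain (u ++ v ++ w)))
    (hloop : entailingTypes F O (exChain (v ++ w)) = entailingTypes F O (exChain w)) (m : ℕ) :
    entails O D (exChain (u ++ (List.replicate m v).flatten)) := by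
  intro I hI x hx
  have hprefix := typePath_entailingTypes hF hOF u (v ++ w)
  have hcycle := typePath_entailingTypes hF hOF v w
  rw [hloop] at hprefix hcycle
  rw [List.append_assoc] at hent
  obtain ⟨y, hxy, -⟩ := (hprefix.append (hcycle.flatten_replicate m)) I hI x
    (tyF_mem_entailingTypes hD hent hx)
  exact hxy.mem_interp_exChain

end Pumping

section Lists

open List

variable {α : Type*}

theorem _root_.List.exists_pump_of_card_le {β : Type*} (f : List α → β) {S : Finset β}
    (hS : ∀ l, f l ∈ S) {l : List α} (hl : S.card ≤ l.length) :
    ∃ u v w, l = u ++ v ++ w ∧ v ≠ [] ∧ f (v ++ w) = f w := by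
  obtain ⟨i, hi, j, hj, hij, heq⟩ := Finset.exists_ne_map_eq_of_card_lt_of_maps_to
    (s := Finset.range (l.length + 1)) (by simpa using Nat.lt_succ_of_le hl)
    (f := fun i => f (l.drop i)) fun _ _ => hS _
  wlog hlt : i < j generalizing i j
  · exact this j hj i hi hij.symm heq.symm (by omega)
  rw [Finset.mem_range] at hi hj
  have hdrop : l.drop i = (l.drop i).take (j - i) ++ l.drop j := by
    conv_lhs => rw [← take_append_drop (j - i) (l.drop i)]
    rw [drop_drop, Nat.add_sub_cancel' hlt.le]
  refine ⟨l.take i, (l.drop i).take (j - i), l.drop j, ?_, ?_, ?_⟩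
  · rw [append_assoc, ← hdrop, take_append_drop]
  · rw [← length_pos_iff, length_take, length_drop]
    omega
  · rw [← hdrop]
    exact heq

theorem _root_.List.le_length_append_flatten_replicate (u : List α) {v : List α} (hv : v ≠ [])
    (m : ℕ) : m ≤ (u ++ (replicate m v).flatten).length := by
  have := length_pos_iff.2 hv
  simp only [length_append, length_flatten, map_replicate, sum_replicate, smul_eq_mul]
  nlinarith

theorem _root_.List.append_flatten_replicate_subset (u v w : List α) (m : ℕ) :
    u ++ (replicate m v).flatten ⊆ u ++ v ++ w := by
  intro a ha
  simp only [mem_append, mem_flatten, mem_replicate] at ha ⊢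
  aesop

end Lists

section Ontology

variable {Cn R : Type} [DecidableEq Cn] [DecidableEq R] {O : Finset (Concept Cn R × Concept Cn R)}

def subOF (O : Finset (Concept Cn R × Concept Cn R)) : Finset (Concept Cn R) :=
  O.biUnion fun ci => ci.1.subF ∪ ci.2.subF

theorem subF_subset_subOF {ci : Concept Cn R × Concept Cn R} (h : ci ∈ O) :
    ci.1.subF ⊆ subOF O ∧ ci.2.subF ⊆ subOF O :=
  ⟨fun _ hc => Finset.mem_biUnion.2 ⟨ci, h, Finset.mem_union_left _ hc⟩,
    fun _ hc => Finset.mem_biUnion.2 ⟨ci, h, Finset.mem_union_right _ hc⟩⟩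

theorem mem_subOF {ci : Concept Cn R × Concept Cn R} (h : ci ∈ O) :
    ci.1 ∈ subOF O ∧ ci.2 ∈ subOF O :=
  ⟨(subF_subset_subOF h).1 ci.1.mem_subF_self, (subF_subset_subOF h).2 ci.2.mem_subF_self⟩

theorem mem_subOF_of_ex_mem_sub {ci : Concept Cn R × Concept Cn R} (h : ci ∈ O) {r : R}
    {D : Concept Cn R} (hD : Concept.ex r D ∈ ci.2.sub) : D ∈ subOF O :=
  (subF_subset_subOF h).2 <|
    Concept.subF_subset_of_mem (Concept.mem_subF.2 hD) (by simp [Concept.subF])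

theorem subF_subset_subOF_of_mem {C : Concept Cn R} (hC : C ∈ subOF O) : C.subF ⊆ subOF O := by
  obtain ⟨ci, hci, hC⟩ := Finset.mem_biUnion.1 hC
  rcases Finset.mem_union.1 hC with hC | hC
  · exact (Concept.subF_subset_of_mem hC).trans (subF_subset_subOF hci).1
  · exact (Concept.subF_subset_of_mem hC).trans (subF_subset_subOF hci).2

theorem card_subOF_le_sizeOnt (O : Finset (Concept Cn R × Concept Cn R)) :
    (subOF O).card ≤ sizeOnt O :=
  Finset.card_biUnion_le.trans <| Finset.sum_le_sum fun _ _ =>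
    (Finset.card_union_le _ _).trans
      (Nat.add_le_add (Concept.card_subF_le_size _) (Concept.card_subF_le_size _))

theorem sigCard_pos {s : R} (hs : s ∈ sigR (O : Ontology Cn R)) : 0 < sigCard O := by
  obtain ⟨ci, hci, hs⟩ := hs
  have : s ∈ O.biUnion fun ci => ci.1.rolesF ∪ ci.2.rolesF :=
    Finset.mem_biUnion.2 ⟨ci, hci, by simpa [Concept.mem_rolesF] using hs⟩
  have := Finset.card_pos.2 ⟨s, this⟩
  unfold sigCard
  omega

theorem card_powerset_powerset_subOF_le {n : ℕ} (hn : sigCard O * 2 ^ 2 ^ sizeOnt O < n) {s : R}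
    (hs : s ∈ sigR (O : Ontology Cn R)) : (subOF O).powerset.powerset.card ≤ n := by
  calc (subOF O).powerset.powerset.card = 2 ^ 2 ^ (subOF O).card := by
        simp only [Finset.card_powerset]
    _ ≤ 2 ^ 2 ^ sizeOnt O :=
        Nat.pow_le_pow_right two_pos (Nat.pow_le_pow_right two_pos (card_subOF_le_sizeOnt O))
    _ ≤ sigCard O * 2 ^ 2 ^ sizeOnt O := Nat.le_mul_of_pos_left _ (sigCard_pos hs)
    _ ≤ n := hn.le

end Ontology

theorem stmt6_general {Cn R : Type} [DecidableEq Cn] [DecidableEq R]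
    (O : Finset (Concept Cn R × Concept Cn R))
    (n : ℕ) (hn : sigCard O * 2 ^ (2 ^ sizeOnt O) < n)
    (r : R) (D : Concept Cn R) (rs : List R)
    (hlen : rs.length = n)
    (hrs : ∀ s ∈ rs, s ∈ sigR (↑O : Ontology Cn R))
    (hD : ∃ ci ∈ O, Concept.ex r D ∈ ci.2.sub)
    (hent : entails (↑O : Ontology Cn R) D (exChain rs)) :
    ∀ m : ℕ, ∃ (r' : R) (D' : Concept Cn R) (rs' : List R),
      m ≤ rs'.length ∧ (∀ s ∈ rs', s ∈ sigR (↑O : Ontology Cn R)) ∧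
      (∃ ci ∈ O, Concept.ex r' D' ∈ ci.2.sub) ∧
      entails (↑O : Ontology Cn R) D' (exChain rs') := by
  intro m
  have hDF : D ∈ subOF O := by
    obtain ⟨ci, hci, hrD⟩ := hD
    exact mem_subOF_of_ex_mem_sub hci hrD
  obtain ⟨s, hs⟩ := List.exists_mem_of_ne_nil rs (by rintro rfl; simp at hlen; omega)
  obtain ⟨u, v, w, rfl, hv, hloop⟩ :=
    List.exists_pump_of_card_le (fun l => entailingTypes (subOF O) (O : Ontology Cn R) (exChain l))
      (fun _ => entailingTypes_mem_powerset _)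
      (hlen ▸ card_powerset_powerset_subOF_le hn (hrs s hs))
  refine ⟨r, D, u ++ (List.replicate m v).flatten, List.le_length_append_flatten_replicate u hv m,
    fun s hs => hrs s (List.append_flatten_replicate_subset u v w m hs), hD, ?_⟩
  exact entails_exChain_pump (fun _ => subF_subset_subOF_of_mem) (fun _ => mem_subOF) hDF hent
    hloop m

theorem stmt6 {Cn R : Type} [DecidableEq Cn] [DecidableEq R]
    (O : Finset (Concept Cn R × Concept Cn R))
    (hO : ∀ ci ∈ O, ci.1.isELU ∧ ci.2.isELU)
    (n : ℕ) (hn : sigCard O * 2 ^ (2 ^ sizeOnt O) < n)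
    (r : R) (D : Concept Cn R) (rs : List R)
    (hlen : rs.length = n)
    (hrs : ∀ s ∈ rs, s ∈ sigR (↑O : Ontology Cn R))
    (hD : ∃ ci ∈ O, Concept.ex r D ∈ ci.2.sub)
    (hent : entails (↑O : Ontology Cn R) D (exChain rs)) :
    ∀ m : ℕ, ∃ (r' : R) (D' : Concept Cn R) (rs' : List R),
      m ≤ rs'.length ∧ (∀ s ∈ rs', s ∈ sigR (↑O : Ontology Cn R)) ∧
      (∃ ci ∈ O, Concept.ex r' D' ∈ ci.2.sub) ∧
      entails (↑O : Ontology Cn R) D' (exChain rs') :=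
  stmt6_general O n hn r D rs hlen hrs hD hent

end DL
end

section
/- Let O be an ELU ontology and C, ∃r.D be EL concepts. If O ⊨ C ⊑ ∃r.D and C contains no top-level conjunct ∃r.C' with O ⊨ C' ⊑ D, then D is O-generatable, i.e., there exists ∃r'.E ∈ sub(O) occurring on the right-hand side of an inclusion in O with O ⊨ E ⊑ D. -/
namespace DL

/-!
Suppose `D` is not `O`-generatable. Then every `∃s.E` occurring on a right-hand side of `O`, and
every top-level conjunct `∃s.E` of `C`, is realised at a point of some model of `O` that, when
`s = r`, lies outside `D`: for right-hand sides and for the conjuncts with role `r` this is a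
countermodel to `E ⊑ D`, for the other conjuncts the one-point model in which everything holds.
Hang disjoint copies of these pointed models below a fresh root that satisfies every concept name.
The root realises every existential restriction of a right-hand side, hence (having no `⊥` or
negation to falsify) every right-hand side, so the result is a model of `O`; the root satisfies
`C` but has no `r`-successor in `D`, contradicting `O ⊨ C ⊑ ∃r.D`.
-/

namespace Concept

variable {Cn R : Type}

theorem isEL.isELU : ∀ {c : Concept Cn R}, c.isEL → c.isELU
  | top, _ => trivial
  | name _, _ => trivial
  | conj _ _, h => ⟨h.1.isELU, h.2.isELU⟩
  | ex _ c, h => isEL.isELU (c := c) h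

theorem isEL_of_mem_tlConj : ∀ {c F : Concept Cn R}, c.isEL → F ∈ c.tlConj → F.isEL
  | conj _ _, _, h, hF => hF.elim (isEL_of_mem_tlConj h.1) (isEL_of_mem_tlConj h.2)
  | top, _, h, rfl | bot, _, h, rfl | name _, _, h, rfl | neg _, _, h, rfl
  | disj _ _, _, h, rfl | ex _ _, _, h, rfl | all _ _, _, h, rfl => h

theorem mem_sub_self (c : Concept Cn R) : c ∈ c.sub := by
  cases c <;> simp [sub]

theorem sub_subset_sub_conj_left (c d : Concept Cn R) : c.sub ⊆ (conj c d).sub :=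
  fun _ h => Or.inr (Or.inl h)

theorem sub_subset_sub_conj_right (c d : Concept Cn R) : d.sub ⊆ (conj c d).sub :=
  fun _ h => Or.inr (Or.inr h)

theorem sub_subset_sub_disj_left (c d : Concept Cn R) : c.sub ⊆ (disj c d).sub :=
  fun _ h => Or.inr (Or.inl h)

end Concept

namespace Interp

variable {Cn R : Type}

theorem mem_interp_of_isELU (I : Interp Cn R) {x : I.Dom} (hnames : ∀ A, x ∈ I.cI A) :
    ∀ {F : Concept Cn R}, F.isELU →
      (∀ s E, Concept.ex s E ∈ F.sub → x ∈ I.interp (.ex s E)) → x ∈ I.interp F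
  | .top, _, _ => trivial
  | .name A, _, _ => hnames A
  | .conj c d, h, hex =>
      ⟨mem_interp_of_isELU I hnames h.1 fun s E hE =>
          hex s E (Concept.sub_subset_sub_conj_left c d hE),
        mem_interp_of_isELU I hnames h.2 fun s E hE =>
          hex s E (Concept.sub_subset_sub_conj_right c d hE)⟩
  | .disj c d, h, hex =>
      Or.inl <| mem_interp_of_isELU I hnames h.1 fun s E hE =>
        hex s E (Concept.sub_subset_sub_disj_left c d hE)
  | .ex s E, _, hex => hex s E (Concept.mem_sub_self _)

theorem mem_interp_of_isEL (I : Interp Cn R) {x : I.Dom} (hnames : ∀ A, x ∈ I.cI A) :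
    ∀ {C : Concept Cn R}, C.isEL →
      (∀ s E, Concept.ex s E ∈ C.tlConj → x ∈ I.interp (.ex s E)) → x ∈ I.interp C
  | .top, _, _ => trivial
  | .name A, _, _ => hnames A
  | .conj _ _, h, hex =>
      ⟨mem_interp_of_isEL I hnames h.1 fun s E hE => hex s E (Or.inl hE),
        mem_interp_of_isEL I hnames h.2 fun s E hE => hex s E (Or.inr hE)⟩
  | .ex s E, _, hex => hex s E rfl

def full : Interp Cn R := ⟨Unit, fun _ => Set.univ, fun _ => Set.univ⟩

theorem full_interp_of_isELU : ∀ {c : Concept Cn R}, c.isELU → full.interp c = Set.univ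
  | .top, _ => rfl
  | .name _, _ => rfl
  | .conj _ _, h => by
      simp only [Interp.interp, full_interp_of_isELU h.1, full_interp_of_isELU h.2,
        Set.univ_inter]
  | .disj _ _, h => by simp only [Interp.interp, full_interp_of_isELU h.1, Set.univ_union]
  | .ex _ c, h => Set.eq_univ_of_forall fun _ =>
      ⟨(), trivial, by rw [full_interp_of_isELU (c := c) h]; trivial⟩

/-- A fresh root `none` lying in every concept name, with an `rl i`-edge to the point `pt i` of a
disjoint copy of each `M i`. -/
def rootedSum {ι : Type} (rl : ι → R) (M : ι → Interp Cn R) (pt : ∀ i, (M i).Dom) :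
    Interp Cn R where
  Dom := Option ((i : ι) × (M i).Dom)
  cI A := fun a => match a with
    | none => True
    | some z => z.2 ∈ (M z.1).cI A
  rI s := fun p => match p with
    | (none, b) => ∃ i, b = some ⟨i, pt i⟩ ∧ rl i = s
    | (some z, b) => ∃ y, b = some ⟨z.1, y⟩ ∧ (z.2, y) ∈ (M z.1).rI s

section rootedSum

variable {ι : Type} (rl : ι → R) (M : ι → Interp Cn R) (pt : ∀ i, (M i).Dom)

theorem some_mem_rootedSum_interp_iff :
    ∀ (c : Concept Cn R) (i : ι) (x : (M i).Dom),
      some ⟨i, x⟩ ∈ (rootedSum rl M pt).interp c ↔ x ∈ (M i).interp c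
  | .top, _, _ => Iff.rfl
  | .bot, _, _ => Iff.rfl
  | .name _, _, _ => Iff.rfl
  | .neg c, i, x => not_congr (some_mem_rootedSum_interp_iff c i x)
  | .conj c d, i, x =>
      and_congr (some_mem_rootedSum_interp_iff c i x) (some_mem_rootedSum_interp_iff d i x)
  | .disj c d, i, x =>
      or_congr (some_mem_rootedSum_interp_iff c i x) (some_mem_rootedSum_interp_iff d i x)
  | .ex s c, i, x => by
      constructor
      · rintro ⟨_, ⟨y, rfl, hxy⟩, hy⟩
        exact ⟨y, hxy, (some_mem_rootedSum_interp_iff c i y).mp hy⟩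
      · rintro ⟨y, hxy, hy⟩
        exact ⟨some ⟨i, y⟩, ⟨y, rfl, hxy⟩, (some_mem_rootedSum_interp_iff c i y).mpr hy⟩
  | .all s c, i, x => by
      constructor
      · intro h y hxy
        exact (some_mem_rootedSum_interp_iff c i y).mp (h _ ⟨y, rfl, hxy⟩)
      · rintro h _ ⟨y, rfl, hxy⟩
        exact (some_mem_rootedSum_interp_iff c i y).mpr (h y hxy)

theorem none_mem_rootedSum_interp_ex_iff (s : R) (E : Concept Cn R) :
    none ∈ (rootedSum rl M pt).interp (.ex s E) ↔
      ∃ i, rl i = s ∧ pt i ∈ (M i).interp E := by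
  constructor
  · rintro ⟨_, ⟨i, rfl, hi⟩, hE⟩
    exact ⟨i, hi, (some_mem_rootedSum_interp_iff rl M pt E i (pt i)).mp hE⟩
  · rintro ⟨i, hi, hE⟩
    exact ⟨_, ⟨i, rfl, hi⟩, (some_mem_rootedSum_interp_iff rl M pt E i (pt i)).mpr hE⟩

theorem rootedSum_isModel {O : Ontology Cn R} (hO : ∀ ci ∈ O, ci.2.isELU)
    (hM : ∀ i, (M i).isModel O)
    (hrhs : ∀ s E, (∃ ci ∈ O, Concept.ex s E ∈ ci.2.sub) →
      ∃ i, rl i = s ∧ pt i ∈ (M i).interp E) :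
    (rootedSum rl M pt).isModel O := by
  rintro ci hci (_ | ⟨i, x⟩) hx
  · refine mem_interp_of_isELU (rootedSum rl M pt) (x := none) (fun _ => trivial) (hO ci hci)
      fun s E hE => ?_
    exact (none_mem_rootedSum_interp_ex_iff rl M pt s E).mpr (hrhs s E ⟨ci, hci, hE⟩)
  · exact (some_mem_rootedSum_interp_iff rl M pt _ i x).mpr
      (hM i ci hci ((some_mem_rootedSum_interp_iff rl M pt _ i x).mp hx))

end rootedSum

end Interp

theorem exists_model_of_not_entails {Cn R : Type} {O : Ontology Cn R} {c d : Concept Cn R}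
    (h : ¬ entails O c d) :
    ∃ (I : Interp Cn R) (x : I.Dom), I.isModel O ∧ x ∈ I.interp c ∧ x ∉ I.interp d := by
  simp only [entails, Set.not_subset, not_forall] at h
  obtain ⟨I, hI, x, hc, hd⟩ := h
  exact ⟨I, x, hI, hc, hd⟩

theorem exists_model_mem_of_isELU {Cn R : Type} {O : Ontology Cn R} {E : Concept Cn R}
    (hO : ∀ ci ∈ O, ci.2.isELU) (hE : E.isELU) :
    ∃ (I : Interp Cn R) (x : I.Dom), I.isModel O ∧ x ∈ I.interp E := by
  refine ⟨Interp.full, (), fun ci hci => ?_, ?_⟩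
  · rw [Interp.full_interp_of_isELU (hO ci hci)]
    exact Set.subset_univ _
  · rw [Interp.full_interp_of_isELU hE]
    trivial

theorem stmt7_general {Cn R : Type} (O : Ontology Cn R)
    (hO : ∀ ci ∈ O, ci.1.isELU ∧ ci.2.isELU)
    (C D : Concept Cn R) (r : R) (hC : C.isEL)
    (hent : entails O C (.ex r D))
    (htl : ¬ ∃ C', Concept.ex r C' ∈ C.tlConj ∧ entails O C' D) :
    ∃ (r' : R) (E : Concept Cn R),
      (∃ ci ∈ O, Concept.ex r' E ∈ ci.2.sub) ∧ entails O E D := by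
  by_contra hgen
  push Not at hgen htl
  have hrhs : ∀ ci ∈ O, ci.2.isELU := fun ci hci => (hO ci hci).2
  let ι := {p : R × Concept Cn R //
    Concept.ex p.1 p.2 ∈ C.tlConj ∨ ∃ ci ∈ O, Concept.ex p.1 p.2 ∈ ci.2.sub}
  have hwitness : ∀ i : ι, ∃ (I : Interp Cn R) (x : I.Dom),
      I.isModel O ∧ x ∈ I.interp i.1.2 ∧ (i.1.1 = r → x ∉ I.interp D) := by
    rintro ⟨⟨s, E⟩, hconj | hgenE⟩
    · by_cases hs : s = r
      · subst hs
        obtain ⟨I, x, hI, hE, hD⟩ := exists_model_of_not_entails (htl E hconj)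
        exact ⟨I, x, hI, hE, fun _ => hD⟩
      · obtain ⟨I, x, hI, hE⟩ := exists_model_mem_of_isELU (E := E) hrhs
          (Concept.isEL_of_mem_tlConj (F := .ex s E) hC hconj).isELU
        exact ⟨I, x, hI, hE, (absurd · hs)⟩
    · obtain ⟨I, x, hI, hE, hD⟩ := exists_model_of_not_entails (hgen s E hgenE)
      exact ⟨I, x, hI, hE, fun _ => hD⟩
  choose M pt hM hE hD using hwitness
  let J := Interp.rootedSum (fun i : ι => i.1.1) M pt
  have hJ : J.isModel O := Interp.rootedSum_isModel _ M pt hrhs hM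
    fun s E h => ⟨⟨(s, E), .inr h⟩, rfl, hE _⟩
  have hroot : none ∈ J.interp C := J.mem_interp_of_isEL (x := none) (fun _ => trivial) hC
    fun s E h => (Interp.none_mem_rootedSum_interp_ex_iff _ M pt s E).mpr
      ⟨⟨(s, E), .inl h⟩, rfl, hE _⟩
  obtain ⟨i, hi, hiD⟩ := (Interp.none_mem_rootedSum_interp_ex_iff _ M pt r D).mp
    (hent J hJ hroot)
  exact hD i hi hiD

theorem stmt7 {Cn R : Type} (O : Ontology Cn R)
    (hO : ∀ ci ∈ O, ci.1.isELU ∧ ci.2.isELU)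
    (C D : Concept Cn R) (r : R) (hC : C.isEL) (hD : D.isEL)
    (hent : entails O C (.ex r D))
    (htl : ¬ ∃ C', Concept.ex r C' ∈ C.tlConj ∧ entails O C' D) :
    ∃ (r' : R) (E : Concept Cn R),
      (∃ ci ∈ O, Concept.ex r' E ∈ ci.2.sub) ∧ entails O E D :=
  stmt7_general O hO C D r hC hent htl

end DL
end

section
/- Let O be an acyclic ELU ontology and let C = A₁ ⊓ ⋯ ⊓ Aₙ ⊓ ∃r₁.E₁ ⊓ ⋯ ⊓ ∃rₘ.Eₘ and D = ∃r.E be EL concepts such that O ⊨ C ⊑ D and there is no i ≤ m with rᵢ = r and O ⊨ Eᵢ ⊑ E. Then there exists i ≤ n with O ⊨ Aᵢ ⊑ D. -/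
namespace DL

/- STATEMENT 8: for acyclic ELU ontologies, an entailed existential restriction not
   witnessed by an existential top-level conjunct is already entailed by one of the
   concept-name conjuncts. -/

/-- An ontology of inclusions `A ⊑ C` (flag `false`) and equivalences `A ≡ C`
    (flag `true`) whose left-hand sides are concept names; uniqueness of left-hand
    sides is built in. -/
structure NamedOnt (Cn R : Type) where
  defn : Cn → Option (Concept Cn R × Bool)

/-- dependency of defined concept names: `B` occurs in the definition of `A`. -/
def NamedOnt.dep {Cn R : Type} (O : NamedOnt Cn R) (A B : Cn) : Prop :=
  ∃ p, O.defn A = some p ∧ B ∈ p.1.names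

/-- acyclicity: no definitorial cycle. -/
def NamedOnt.acyclic {Cn R : Type} (O : NamedOnt Cn R) : Prop :=
  ∀ A : Cn, ¬ Relation.TransGen O.dep A A

/-- a model of a named ontology. -/
def Interp.isModelN {Cn R : Type} (I : Interp Cn R) (O : NamedOnt Cn R) : Prop :=
  ∀ (A : Cn) (c : Concept Cn R) (b : Bool), O.defn A = some (c, b) →
    I.interp (.name A) ⊆ I.interp c ∧ (b = true → I.interp c ⊆ I.interp (.name A))

/-- entailment w.r.t. a named ontology. -/
def entailsN {Cn R : Type} (O : NamedOnt Cn R) (c d : Concept Cn R) : Prop :=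
  ∀ I : Interp Cn R, I.isModelN O → I.interp c ⊆ I.interp d

/-- conjunction of a list of concepts. -/
def bigConj {Cn R : Type} (l : List (Concept Cn R)) : Concept Cn R :=
  l.foldr Concept.conj Concept.top

/-
Suppose no `Aᵢ` entails `∃r.E`, and take countermodels `(Iᵢ, xᵢ)` for them, together with models
`(Jⱼ, yⱼ)` of `Eⱼ` in which `yⱼ ∉ E` whenever `rⱼ = r` (for `rⱼ ≠ r` the one-point model with
everything true will do). Glue all of them below a fresh root that carries the concept names of
every `xᵢ`, inherits every role successor of every `xᵢ`, and has an `rⱼ`-edge to each `yⱼ`.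
Components are not changed by the gluing, so they still satisfy the ontology; the root satisfies
every right-hand side of an inclusion for a name it carries, since ELU concepts are preserved when
passing from `xᵢ` to the root. The root labels for equivalences are closed off by a least fixed
point, which ELU monotonicity makes possible. The root satisfies `C`, hence `∃r.E`, and its
`r`-successors are exactly the `r`-successors of the `xᵢ` and the `yⱼ` with `rⱼ = r`: contradiction.
-/

variable {Cn R : Type}

theorem Concept.isELU_of_isEL {c : Concept Cn R} (h : c.isEL) : c.isELU := by
  induction c <;> simp_all [isEL, isELU]

theorem Interp.mem_interp_bigConj (I : Interp Cn R) (l : List (Concept Cn R)) (x : I.Dom) :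
    x ∈ I.interp (bigConj l) ↔ ∀ c ∈ l, x ∈ I.interp c := by
  induction l with
  | nil => simp [bigConj, Interp.interp]
  | cons c l ih =>
    simp only [List.mem_cons, forall_eq_or_imp, ← ih]
    rfl

theorem exists_countermodel_of_not_entailsN {O : NamedOnt Cn R} {c d : Concept Cn R}
    (h : ¬ entailsN O c d) :
    ∃ I : Interp Cn R, I.isModelN O ∧ ∃ x ∈ I.interp c, x ∉ I.interp d := by
  simpa only [entailsN, not_forall, Set.not_subset, exists_prop] using h

def Interp.univ (Cn R : Type) : Interp Cn R :=
  ⟨PUnit, fun _ => Set.univ, fun _ => Set.univ⟩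

theorem Interp.mem_univ_interp {c : Concept Cn R} (hc : c.isELU) (x : PUnit) :
    x ∈ (Interp.univ Cn R).interp c := by
  induction c with
  | top | name _ => trivial
  | bot | neg _ _ | all _ _ _ => exact hc.elim
  | conj _ _ ihc ihd => exact ⟨ihc hc.1, ihd hc.2⟩
  | disj _ _ ihc _ => exact Or.inl (ihc hc.1)
  | ex _ _ ih => exact ⟨x, trivial, ih hc⟩

theorem Interp.univ_isModelN {O : NamedOnt Cn R}
    (hELU : ∀ (A : Cn) (p : Concept Cn R × Bool), O.defn A = some p → p.1.isELU) :
    (Interp.univ Cn R).isModelN O := fun A c b hdef =>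
  ⟨fun x _ => mem_univ_interp (hELU A (c, b) hdef) x, fun _ _ _ => trivial⟩

theorem exists_model_mem_interp_of_not_entailsN {O : NamedOnt Cn R}
    (hELU : ∀ (A : Cn) (p : Concept Cn R × Bool), O.defn A = some p → p.1.isELU)
    {s r : R} {c E : Concept Cn R} (hc : c.isELU) (h : s = r → ¬ entailsN O c E) :
    ∃ I : Interp Cn R, I.isModelN O ∧ ∃ x ∈ I.interp c, s = r → x ∉ I.interp E := by
  by_cases hsr : s = r
  · obtain ⟨I, hI, x, hxc, hxE⟩ := exists_countermodel_of_not_entailsN (h hsr)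
    exact ⟨I, hI, x, hxc, fun _ => hxE⟩
  · exact ⟨Interp.univ Cn R, Interp.univ_isModelN hELU, PUnit.unit,
      Interp.mem_univ_interp hc _, fun h => absurd h hsr⟩

section RootedSum

variable {ι : Type}

/-- The disjoint union of the interpretations `M i` below a fresh root `none`, which carries the
concept names in `X` and has an `s`-edge to exactly the points in `e s`. -/
def rootedSum (M : ι → Interp Cn R) (X : Set Cn) (e : R → Set (Σ i, (M i).Dom)) :
    Interp Cn R where
  Dom := Option (Σ i, (M i).Dom)
  cI A := fun
    | none => A ∈ X
    | some ⟨i, u⟩ => u ∈ (M i).cI A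
  rI s := {q | (∃ i u v, q = (some ⟨i, u⟩, some ⟨i, v⟩) ∧ (u, v) ∈ (M i).rI s) ∨
    ∃ z ∈ e s, q = (none, some z)}

variable {M : ι → Interp Cn R} {X : Set Cn} {e : R → Set (Σ i, (M i).Dom)}

theorem rootedSum_rI_some_iff {s : R} {i : ι} {u : (M i).Dom} {y : Option (Σ i, (M i).Dom)} :
    (some ⟨i, u⟩, y) ∈ (rootedSum M X e).rI s ↔
      ∃ v, y = some ⟨i, v⟩ ∧ (u, v) ∈ (M i).rI s := by
  constructor
  · rintro (⟨i', u', v, hq, huv⟩ | ⟨z, -, hq⟩)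
    · simp only [Prod.mk.injEq, Option.some.injEq, Sigma.mk.injEq] at hq
      obtain ⟨⟨rfl, hu⟩, rfl, -⟩ := hq
      cases eq_of_heq hu
      exact ⟨v, rfl, huv⟩
    · simp at hq
  · rintro ⟨v, rfl, huv⟩
    exact Or.inl ⟨i, u, v, rfl, huv⟩

theorem rootedSum_rI_none_iff {s : R} {y : Option (Σ i, (M i).Dom)} :
    (none, y) ∈ (rootedSum M X e).rI s ↔ ∃ z ∈ e s, y = some z := by
  constructor
  · rintro (⟨i, u, v, hq, -⟩ | ⟨z, hz, hq⟩)
    · simp at hq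
    · exact ⟨z, hz, (Prod.mk.inj hq).2⟩
  · rintro ⟨z, hz, rfl⟩
    exact Or.inr ⟨z, hz, rfl⟩

theorem mem_rootedSum_interp_some (c : Concept Cn R) (i : ι) (u : (M i).Dom) :
    some ⟨i, u⟩ ∈ (rootedSum M X e).interp c ↔ u ∈ (M i).interp c := by
  induction c generalizing u with
  | top | bot | name _ => rfl
  | neg c ih => exact not_congr (ih u)
  | conj c d ihc ihd => exact and_congr (ihc u) (ihd u)
  | disj c d ihc ihd => exact or_congr (ihc u) (ihd u)
  | ex s c ih =>
    constructor
    · rintro ⟨y, hy, hyc⟩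
      obtain ⟨v, rfl, huv⟩ := rootedSum_rI_some_iff.1 hy
      exact ⟨v, huv, (ih v).1 hyc⟩
    · rintro ⟨v, huv, hv⟩
      exact ⟨some ⟨i, v⟩, rootedSum_rI_some_iff.2 ⟨v, rfl, huv⟩, (ih v).2 hv⟩
  | all s c ih =>
    constructor
    · intro h v huv
      exact (ih v).1 (h _ (rootedSum_rI_some_iff.2 ⟨v, rfl, huv⟩))
    · intro h y hy
      obtain ⟨v, rfl, huv⟩ := rootedSum_rI_some_iff.1 hy
      exact (ih v).2 (h v huv)

theorem root_mem_rootedSum_interp_ex {s : R} {c : Concept Cn R} :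
    none ∈ (rootedSum M X e).interp (.ex s c) ↔ ∃ z ∈ e s, z.2 ∈ (M z.1).interp c := by
  constructor
  · rintro ⟨y, hy, hyc⟩
    obtain ⟨⟨i, v⟩, hz, rfl⟩ := rootedSum_rI_none_iff.1 hy
    exact ⟨⟨i, v⟩, hz, (mem_rootedSum_interp_some c i v).1 hyc⟩
  · rintro ⟨⟨i, v⟩, hz, hv⟩
    exact ⟨some ⟨i, v⟩, rootedSum_rI_none_iff.2 ⟨_, hz, rfl⟩,
      (mem_rootedSum_interp_some c i v).2 hv⟩

theorem rootedSum_interp_mono {Y : Set Cn} (hXY : X ⊆ Y) {c : Concept Cn R} (hc : c.isELU)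
    (x : Option (Σ i, (M i).Dom)) (hx : x ∈ (rootedSum M X e).interp c) :
    x ∈ (rootedSum M Y e).interp c := by
  induction c generalizing x with
  | top => trivial
  | bot | neg _ _ | all _ _ _ => exact hc.elim
  | name A => rcases x with _ | _; exacts [hXY hx, hx]
  | conj _ _ ihc ihd => exact ⟨ihc hc.1 x hx.1, ihd hc.2 x hx.2⟩
  | disj _ _ ihc ihd => exact hx.imp (ihc hc.1 x) (ihd hc.2 x)
  | ex _ _ ih =>
    obtain ⟨y, hy, hyc⟩ := hx
    exact ⟨y, hy, ih hc y hyc⟩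

theorem root_mem_rootedSum_interp {i : ι} {u : (M i).Dom} (hX : ∀ A, u ∈ (M i).cI A → A ∈ X)
    (he : ∀ s v, (u, v) ∈ (M i).rI s → ⟨i, v⟩ ∈ e s) {c : Concept Cn R} (hc : c.isELU)
    (hu : u ∈ (M i).interp c) : none ∈ (rootedSum M X e).interp c := by
  induction c with
  | top => trivial
  | bot | neg _ _ | all _ _ _ => exact hc.elim
  | name A => exact hX A hu
  | conj _ _ ihc ihd => exact ⟨ihc hc.1 hu.1, ihd hc.2 hu.2⟩
  | disj _ _ ihc ihd => exact hu.imp (ihc hc.1) (ihd hc.2)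
  | ex s _ _ =>
    obtain ⟨v, huv, hv⟩ := hu
    exact root_mem_rootedSum_interp_ex.2 ⟨⟨i, v⟩, he s v huv, hv⟩

theorem rootedSum_isModelN {O : NamedOnt Cn R} (hM : ∀ i, (M i).isModelN O)
    (hroot : ∀ A c b, O.defn A = some (c, b) →
      (A ∈ X → none ∈ (rootedSum M X e).interp c) ∧
        (b = true → none ∈ (rootedSum M X e).interp c → A ∈ X)) :
    (rootedSum M X e).isModelN O := by
  intro A c b hdef
  refine ⟨fun x hx => ?_, fun hb x hx => ?_⟩ <;> rcases x with _ | ⟨i, u⟩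
  · exact (hroot A c b hdef).1 hx
  · exact (mem_rootedSum_interp_some c i u).2 ((hM i A c b hdef).1 hx)
  · exact (hroot A c b hdef).2 hb hx
  · exact (hM i A c b hdef).2 hb ((mem_rootedSum_interp_some c i u).1 hx)

/-- The root labels are the least set of names containing `base` and every name whose definition
by equivalence holds at the root. -/
theorem exists_rootedSum_isModelN {O : NamedOnt Cn R}
    (hELU : ∀ (A : Cn) (p : Concept Cn R × Bool), O.defn A = some p → p.1.isELU)
    (hM : ∀ i, (M i).isModelN O) (base : Set Cn)
    (hbase : ∀ A c b, O.defn A = some (c, b) → A ∈ base → none ∈ (rootedSum M base e).interp c) :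
    ∃ X, base ⊆ X ∧ (rootedSum M X e).isModelN O := by
  let F : Set Cn →o Set Cn :=
    ⟨fun X => base ∪ {A | ∃ c, O.defn A = some (c, true) ∧ none ∈ (rootedSum M X e).interp c},
      fun X Y hXY => Set.union_subset_union_right _ fun A ⟨c, hdef, hc⟩ =>
        ⟨c, hdef, rootedSum_interp_mono hXY (hELU A (c, true) hdef) none hc⟩⟩
  have hfix : F (OrderHom.lfp F) = OrderHom.lfp F := OrderHom.map_lfp F
  have hsub : base ⊆ OrderHom.lfp F := hfix ▸ Set.subset_union_left
  refine ⟨OrderHom.lfp F, hsub, rootedSum_isModelN hM fun A c b hdef => ⟨fun hA => ?_, ?_⟩⟩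
  · rw [← hfix] at hA
    rcases hA with hA | ⟨c', hdef', hc'⟩
    · exact rootedSum_interp_mono hsub (hELU A (c, b) hdef) none (hbase A c b hdef hA)
    · cases hdef.symm.trans hdef'
      exact hc'
  · rintro rfl hc
    rw [← hfix]
    exact Or.inr ⟨c, hdef, hc⟩

end RootedSum

theorem exists_merged_model {O : NamedOnt Cn R}
    (hELU : ∀ (A : Cn) (p : Concept Cn R × Bool), O.defn A = some p → p.1.isELU)
    {α β : Type} (IA : α → Interp Cn R) (xA : ∀ a, (IA a).Dom) (IB : β → Interp Cn R)
    (xB : ∀ b, (IB b).Dom) (ρ : β → R)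
    (hIA : ∀ a, (IA a).isModelN O) (hIB : ∀ b, (IB b).isModelN O) :
    ∃ (I : Interp Cn R) (x : I.Dom), I.isModelN O ∧
      (∀ a A, xA a ∈ (IA a).cI A → x ∈ I.cI A) ∧
      ∀ s c, x ∈ I.interp (.ex s c) ↔
        (∃ a, xA a ∈ (IA a).interp (.ex s c)) ∨ ∃ b, ρ b = s ∧ xB b ∈ (IB b).interp c := by
  let M : α ⊕ β → Interp Cn R := Sum.elim IA IB
  let e : R → Set (Σ i, (M i).Dom) := fun s => fun
    | ⟨.inl a, v⟩ => (xA a, v) ∈ (IA a).rI s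
    | ⟨.inr b, v⟩ => v = xB b ∧ ρ b = s
  have hM : ∀ i, (M i).isModelN O := Sum.rec hIA hIB
  let base : Set Cn := {A | ∃ a, xA a ∈ (IA a).cI A}
  obtain ⟨X, hbase, hmodel⟩ := exists_rootedSum_isModelN (e := e) hELU hM base
    fun A c b hdef ⟨a, ha⟩ => root_mem_rootedSum_interp (X := base) (i := .inl a)
      (fun B hB => ⟨a, hB⟩) (fun _ _ h => h) (hELU A (c, b) hdef) ((hIA a A c b hdef).1 ha)
  refine ⟨rootedSum M X e, none, hmodel, fun a A h => hbase ⟨a, h⟩, fun s c =>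
    root_mem_rootedSum_interp_ex.trans ?_⟩
  constructor
  · rintro ⟨⟨a | b, v⟩, hz, hv⟩
    · exact Or.inl ⟨a, v, hz, hv⟩
    · obtain ⟨rfl, rfl⟩ := hz
      exact Or.inr ⟨b, rfl, hv⟩
  · rintro (⟨a, v, hv, hvc⟩ | ⟨b, rfl, hb⟩)
    · exact ⟨⟨.inl a, v⟩, hv, hvc⟩
    · exact ⟨⟨.inr b, xB b⟩, ⟨rfl, rfl⟩, hb⟩

theorem stmt8_general {Cn R : Type} (O : NamedOnt Cn R)
    (hELU : ∀ (A : Cn) (p : Concept Cn R × Bool), O.defn A = some p → p.1.isELU)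
    (As : List Cn) (Es : List (R × Concept Cn R))
    (hEs : ∀ p ∈ Es, (p.2).isEL)
    (r : R) (E : Concept Cn R)
    (hent : entailsN O
      (bigConj (As.map Concept.name ++ Es.map fun p => Concept.ex p.1 p.2))
      (.ex r E))
    (hno : ∀ p ∈ Es, p.1 = r → ¬ entailsN O p.2 E) :
    ∃ A ∈ As, entailsN O (.name A) (.ex r E) := by
  by_contra! hcon
  choose IA hIA xA hxA hxA' using fun a : {A // A ∈ As} =>
    exists_countermodel_of_not_entailsN (hcon a.1 a.2)
  choose IB hIB xB hxB hxB' using fun p : {p // p ∈ Es} =>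
    exists_model_mem_interp_of_not_entailsN hELU (Concept.isELU_of_isEL (hEs p.1 p.2)) (hno p.1 p.2)
  obtain ⟨I, x, hI, hlabel, hex⟩ :=
    exists_merged_model hELU IA xA IB xB (fun p => p.1.1) hIA hIB
  have hC : x ∈ I.interp (bigConj (As.map Concept.name ++ Es.map fun p => .ex p.1 p.2)) := by
    refine (I.mem_interp_bigConj _ x).2 fun c hc => ?_
    simp only [List.mem_append, List.mem_map] at hc
    rcases hc with ⟨A, hA, rfl⟩ | ⟨p, hp, rfl⟩
    · exact hlabel ⟨A, hA⟩ A (hxA ⟨A, hA⟩)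
    · exact (hex _ _).2 (Or.inr ⟨⟨p, hp⟩, rfl, hxB ⟨p, hp⟩⟩)
  rcases (hex r E).1 (hent I hI hC) with ⟨a, ha⟩ | ⟨p, hpr, hp⟩
  · exact hxA' a ha
  · exact hxB' p hpr hp

theorem stmt8 {Cn R : Type} (O : NamedOnt Cn R)
    (hELU : ∀ (A : Cn) (p : Concept Cn R × Bool), O.defn A = some p → p.1.isELU)
    (hacyc : O.acyclic)
    (As : List Cn) (Es : List (R × Concept Cn R))
    (hEs : ∀ p ∈ Es, (p.2).isEL)
    (r : R) (E : Concept Cn R) (hE : E.isEL)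
    (hent : entailsN O
      (bigConj (As.map Concept.name ++ Es.map fun p => Concept.ex p.1 p.2))
      (.ex r E))
    (hno : ∀ p ∈ Es, p.1 = r → ¬ entailsN O p.2 E) :
    ∃ A ∈ As, entailsN O (.name A) (.ex r E) :=
  stmt8_general O hELU As Es hEs r E hent hno

end DL
end

section
/- For every n ≥ 1 there exist pairwise non-logically-equivalent EL concepts C₁, …, C_m over a signature of 2n concept names and 2 role names, all of depth at most n, with m ≥ tower(n, n) (where tower(0,k) = k and tower(k+1,n) = 2^tower(k,n)); moreover, any two EL concepts of distinct depth are not logically equivalent. -/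
namespace DL

/- STATEMENT 19: with 2n concept names and 2 role names there are at least tower(n,n)
   pairwise non-equivalent EL concepts of depth ≤ n; moreover EL concepts of distinct
   depth are never logically equivalent. -/

/-- tower of exponentials. -/
def tower : ℕ → ℕ → ℕ
  | 0, n => n
  | k + 1, n => 2 ^ tower k n

/-! A family of concepts `C x` is told apart by points `p x` of an interpretation in which
`p x` satisfies `C y` exactly when `x = y`. From such a family indexed by `X` one gets a family
indexed by `X → R`: put `C' T = ⨅ₓ ∃(T x).(C x)` and let `p' T` be a fresh root with a `T x`-edge
to `p x` for each `x`; the old points keep their concepts since no edge leaves them towards a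
root. With two roles each extra level of depth thus takes `m` inequivalent concepts to `2 ^ m`,
and starting from the `2n` concept names, depth `n` gives `tower n (2n) ≥ tower n n`.

Concepts of different depth are separated by the interpretation on `ℕ` with all concept names
true and edges `x + 1 → x`, where an EL concept holds exactly at the numbers `≥` its depth. -/

lemma tower_mono_right (k : ℕ) : Monotone (tower k) := by
  induction k with
  | zero => exact fun _ _ h => h
  | succ k ih => exact fun _ _ h => Nat.pow_le_pow_right two_pos (ih h)

lemma Interp.isModel_empty {Cn R : Type} (I : Interp Cn R) : I.isModel ∅ :=
  fun _ h => absurd h (Set.notMem_empty _)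

namespace Concept

variable {Cn R : Type}

def conjAll (l : List (Concept Cn R)) : Concept Cn R :=
  l.foldr conj top

lemma isEL_conjAll {l : List (Concept Cn R)} (h : ∀ c ∈ l, c.isEL) : (conjAll l).isEL := by
  induction l with
  | nil => trivial
  | cons c l ih => exact ⟨h c List.mem_cons_self, ih fun d hd => h d (List.mem_cons_of_mem _ hd)⟩

lemma depth_conjAll_le {l : List (Concept Cn R)} {k : ℕ} (h : ∀ c ∈ l, c.depth ≤ k) :
    (conjAll l).depth ≤ k := by
  induction l with
  | nil => exact Nat.zero_le k
  | cons c l ih =>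
    exact max_le (h c List.mem_cons_self) (ih fun d hd => h d (List.mem_cons_of_mem _ hd))

end Concept

namespace Interp

variable {Cn R : Type}

lemma mem_interp_conjAll (I : Interp Cn R) (l : List (Concept Cn R)) (x : I.Dom) :
    x ∈ I.interp (Concept.conjAll l) ↔ ∀ c ∈ l, x ∈ I.interp c := by
  induction l with
  | nil => simp [Concept.conjAll, interp]
  | cons c l ih => simp [Concept.conjAll, interp, ← ih]

def addRootsRel (I : Interp Cn R) {N : Type} (E : R → N → I.Dom → Prop) (r : R) :
    I.Dom ⊕ N → I.Dom ⊕ N → Prop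
  | .inl d, .inl e => (d, e) ∈ I.rI r
  | .inr t, .inl e => E r t e
  | _, .inr _ => False

def addRoots (I : Interp Cn R) (N : Type) (E : R → N → I.Dom → Prop) : Interp Cn R where
  Dom := I.Dom ⊕ N
  cI A := Sum.inl '' I.cI A
  rI r := {p | I.addRootsRel E r p.1 p.2}

variable (I : Interp Cn R) (N : Type) (E : R → N → I.Dom → Prop)

lemma inl_mem_interp_addRoots_iff (C : Concept Cn R) (d : I.Dom) :
    (Sum.inl d : (I.addRoots N E).Dom) ∈ (I.addRoots N E).interp C ↔ d ∈ I.interp C := by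
  induction C generalizing d with
  | top | bot => rfl
  | name A => exact Sum.inl_injective.mem_set_image
  | neg c ih => exact not_congr (ih d)
  | conj c c' ih ih' => exact and_congr (ih d) (ih' d)
  | disj c c' ih ih' => exact or_congr (ih d) (ih' d)
  | ex r c ih =>
    constructor
    · rintro ⟨e | t, hde, he⟩
      exacts [⟨e, hde, (ih e).1 he⟩, hde.elim]
    · rintro ⟨e, hde, he⟩
      exact ⟨.inl e, hde, (ih e).2 he⟩
  | all r c ih =>
    constructor
    · exact fun h e hde => (ih e).1 (h (.inl e) hde)
    · rintro h (e | t) hde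
      exacts [(ih e).2 (h e hde), hde.elim]

lemma inr_mem_interp_addRoots_ex_iff (r : R) (C : Concept Cn R) (t : N) :
    (Sum.inr t : (I.addRoots N E).Dom) ∈ (I.addRoots N E).interp (.ex r C) ↔
      ∃ e, E r t e ∧ e ∈ I.interp C := by
  constructor
  · rintro ⟨e | s, hte, he⟩
    exacts [⟨e, hte, (I.inl_mem_interp_addRoots_iff N E C e).1 he⟩, hte.elim]
  · rintro ⟨e, hte, he⟩
    exact ⟨.inl e, hte, (I.inl_mem_interp_addRoots_iff N E C e).2 he⟩

end Interp

structure SeparatedFamily (Cn R : Type) (d : ℕ) where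
  X : Type
  [fintype : Fintype X]
  C : X → Concept Cn R
  isEL : ∀ x, (C x).isEL
  depth_le : ∀ x, (C x).depth ≤ d
  I : Interp Cn R
  pt : X → I.Dom
  pt_mem_iff : ∀ x y, pt x ∈ I.interp (C y) ↔ x = y

namespace SeparatedFamily

attribute [instance] SeparatedFamily.fintype

variable {Cn R : Type} {d : ℕ}

lemma not_lequiv (F : SeparatedFamily Cn R d) {x y : F.X} (hxy : x ≠ y) :
    ¬ lequiv (F.C x) (F.C y) := fun h =>
  hxy ((F.pt_mem_iff x y).1 (h.1 F.I F.I.isModel_empty ((F.pt_mem_iff x x).2 rfl)))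

def ofNames (Cn R : Type) [Fintype Cn] : SeparatedFamily Cn R 0 where
  X := Cn
  C := .name
  isEL _ := trivial
  depth_le _ := le_rfl
  I := { Dom := Cn, cI := fun A => {A}, rI := fun _ => ∅ }
  pt := id
  pt_mem_iff _ _ := Iff.rfl

variable (F : SeparatedFamily Cn R d)

noncomputable def stepConcept (T : F.X → R) : Concept Cn R :=
  .conjAll (Finset.univ.toList.map fun x => .ex (T x) (F.C x))

def stepInterp : Interp Cn R :=
  F.I.addRoots (F.X → R) fun r T e => ∃ x, T x = r ∧ e = F.pt x

def stepRoot (T : F.X → R) : F.stepInterp.Dom :=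
  Sum.inr T

lemma stepRoot_mem_iff (T T' : F.X → R) :
    F.stepRoot T ∈ F.stepInterp.interp (F.stepConcept T') ↔ T = T' := by
  rw [stepConcept, Interp.mem_interp_conjAll]
  simp only [List.forall_mem_map, Finset.mem_toList, Finset.mem_univ, forall_const]
  refine (forall_congr' fun x => F.I.inr_mem_interp_addRoots_ex_iff _ _ _ _ _).trans ?_
  simp [F.pt_mem_iff, funext_iff]

open Classical in
noncomputable def step [Fintype R] : SeparatedFamily Cn R (d + 1) where
  X := F.X → R
  C := F.stepConcept
  isEL T := Concept.isEL_conjAll <| by simpa [Concept.isEL] using fun x => F.isEL x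
  depth_le T := Concept.depth_conjAll_le <| by simpa [Concept.depth] using fun x => F.depth_le x
  I := F.stepInterp
  pt := F.stepRoot
  pt_mem_iff := F.stepRoot_mem_iff

lemma card_step [Fintype R] : Fintype.card F.step.X = Fintype.card R ^ Fintype.card F.X := by
  simp only [Fintype.card_eq_nat_card]
  exact Nat.card_fun

noncomputable def towerFamily (Cn R : Type) [Fintype Cn] [Fintype R] :
    (k : ℕ) → SeparatedFamily Cn R k
  | 0 => ofNames Cn R
  | k + 1 => (towerFamily Cn R k).step

lemma card_towerFamily (Cn : Type) [Fintype Cn] (k : ℕ) :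
    Fintype.card (towerFamily Cn (Fin 2) k).X = tower k (Fintype.card Cn) := by
  induction k with
  | zero => rfl
  | succ k ih => rw [towerFamily, card_step, ih, Fintype.card_fin, tower]

end SeparatedFamily

def natDescent (Cn R : Type) : Interp Cn R where
  Dom := ℕ
  cI _ := Set.univ
  rI _ := {p | p.1 = p.2 + 1}

lemma mem_interp_natDescent_iff {Cn R : Type} {C : Concept Cn R} (hC : C.isEL) (x : ℕ) :
    x ∈ (natDescent Cn R).interp C ↔ C.depth ≤ x := by
  induction C generalizing x with
  | top | name _ => exact iff_of_true trivial (Nat.zero_le x)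
  | bot | neg _ _ | disj _ _ _ _ | all _ _ _ => exact hC.elim
  | conj c c' ih ih' => exact ((ih hC.1 x).and (ih' hC.2 x)).trans max_le_iff.symm
  | ex r c ih =>
    rw [Concept.depth]
    constructor
    · rintro ⟨(y : ℕ), hxy, hy⟩
      obtain rfl : x = y + 1 := hxy
      exact Nat.succ_le_succ ((ih hC y).1 hy)
    · intro hx
      exact ⟨x - 1, show x = x - 1 + 1 by omega, (ih hC _).2 (by omega)⟩

lemma not_entails_of_depth_lt {Cn R : Type} {C D : Concept Cn R} (hC : C.isEL) (hD : D.isEL)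
    (h : C.depth < D.depth) : ¬ entails ∅ C D := fun hCD =>
  (mem_interp_natDescent_iff hD _).not.2 (not_le.2 h)
    (hCD _ (Interp.isModel_empty _) ((mem_interp_natDescent_iff hC _).2 le_rfl))

lemma not_lequiv_of_depth_ne {Cn R : Type} {C D : Concept Cn R} (hC : C.isEL) (hD : D.isEL)
    (h : C.depth ≠ D.depth) : ¬ lequiv C D := by
  rintro ⟨hCD, hDC⟩
  rcases h.lt_or_gt with h | h
  exacts [not_entails_of_depth_lt hC hD h hCD, not_entails_of_depth_lt hD hC h hDC]

theorem stmt19 :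
    ∀ n : ℕ, 1 ≤ n →
      (∃ (m : ℕ) (Cs : Fin m → Concept (Fin (2 * n)) (Fin 2)),
        tower n n ≤ m ∧
        (∀ i, (Cs i).isEL ∧ (Cs i).depth ≤ n) ∧
        ∀ i j, i ≠ j → ¬ lequiv (Cs i) (Cs j)) ∧
      (∀ (Cn R : Type) (C D : Concept Cn R),
        C.isEL → D.isEL → C.depth ≠ D.depth → ¬ lequiv C D) := by
  intro n _
  refine ⟨?_, fun _ _ _ _ => not_lequiv_of_depth_ne⟩
  let F := SeparatedFamily.towerFamily (Fin (2 * n)) (Fin 2) n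
  let e := (Fintype.equivFin F.X).symm
  refine ⟨Fintype.card F.X, F.C ∘ e, ?_, fun i => ⟨F.isEL _, F.depth_le _⟩,
    fun i j hij => F.not_lequiv (e.injective.ne hij)⟩
  rw [SeparatedFamily.card_towerFamily, Fintype.card_fin]
  exact tower_mono_right n (by omega)
end DL
end
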